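/- arXiv:2401.15437 — 3 statements merged into one kernel-verified Lean document; each statement's English description precedes it below -/
import Mathlib

section
/- For positive integers a, b, m, n, let R_1 = (r_1,…,r_a), S_1 = (s_1,…,s_b), R_2 = (r'_1,…,r'_m), S_2 = (s'_1,…,s'_n), R_3 = (r''_1,…,r''_m), S_3 = (s''_1,…,s''_n) be vectors of nonnegative integers with r_i ≤ b for all i and s_j ≤ a for all j. Let u = r_1+⋯+r_a, u' = r'_1+⋯+r'_m, u'' = r''_1+⋯+r''_m, and suppose u' ≠ u''. If D_1, D_2, D_3 are antichains in the Bruhat orders of A(R_1,S_1), A(R_2,S_2), A(R_3,S_3) respectively, then there is an antichain of size |D_1|·|D_2|^u·|D_3|^{ab−u} in the Bruhat order of the class A(R,S) of am × bn (0,1)-matrices, where R is the am-vector whose entry indexed by ((i−1)m + k) equals r_i·r'_k + (b − r_i)·r''_k, and S is the bn-vector whose entry indexed by ((j−1)n + ℓ) equals s_j·s'_ℓ + (a − s_j)·s''_ℓ. -/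
open Finset

/-- A matrix of zeros and ones. -/
def ZeroOne {m n : ℕ} (A : Matrix (Fin m) (Fin n) ℕ) : Prop :=
  ∀ i j, A i j = 0 ∨ A i j = 1

/-- Sum of the entries of row `i`. -/
def rowSum {m n : ℕ} (A : Matrix (Fin m) (Fin n) ℕ) (i : Fin m) : ℕ :=
  ∑ j, A i j

/-- Sum of the entries of column `j`. -/
def colSum {m n : ℕ} (A : Matrix (Fin m) (Fin n) ℕ) (j : Fin n) : ℕ :=
  ∑ i, A i j

/-- The class `A(R,S)` of (0,1)-matrices with row sum vector `R` and
column sum vector `S`. -/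
def classRS {m n : ℕ} (R : Fin m → ℕ) (S : Fin n → ℕ) :
    Set (Matrix (Fin m) (Fin n) ℕ) :=
  {A | ZeroOne A ∧ (∀ i, rowSum A i = R i) ∧ (∀ j, colSum A j = S j)}

/-- The class `A(n,k)` of square (0,1)-matrices of order `n` with all row
and column sums equal to `k`. -/
def classA (n k : ℕ) : Set (Matrix (Fin n) (Fin n) ℕ) :=
  classRS (fun _ => k) (fun _ => k)

/-- `sigmaM A i j` is the sum of the entries of the leading submatrix of `A`
on rows `0,…,i` and columns `0,…,j` (0-based), i.e. `σ_{i+1,j+1}(A)` in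
1-based notation. -/
def sigmaM {m n : ℕ} (A : Matrix (Fin m) (Fin n) ℕ) (i : Fin m) (j : Fin n) : ℕ :=
  ∑ k ∈ Finset.univ.filter (fun k : Fin m => k ≤ i),
    ∑ l ∈ Finset.univ.filter (fun l : Fin n => l ≤ j), A k l

/-- The Bruhat order: `A ⪯_B C` iff `σ_{ij}(A) ≥ σ_{ij}(C)` for all `i, j`. -/
def brle {m n : ℕ} (A C : Matrix (Fin m) (Fin n) ℕ) : Prop :=
  ∀ i j, sigmaM C i j ≤ sigmaM A i j

/-- Incomparability in the Bruhat order. -/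
def Incomp {m n : ℕ} (A C : Matrix (Fin m) (Fin n) ℕ) : Prop :=
  ¬ brle A C ∧ ¬ brle C A

/-- A set of matrices that is an antichain in the Bruhat order. -/
def IsAntichainB {m n : ℕ} (D : Set (Matrix (Fin m) (Fin n) ℕ)) : Prop :=
  ∀ A ∈ D, ∀ C ∈ D, A ≠ C → Incomp A C

/-- The number of inversions of a (0,1)-matrix: pairs of `1` entries, one of
which is strictly to the top-right of the other (each unordered pair counted
once, via the representative whose first member is in the lower-indexed row). -/
def nu {m n : ℕ} (A : Matrix (Fin m) (Fin n) ℕ) : ℕ :=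
  (Finset.univ.filter (fun p : (Fin m × Fin n) × (Fin m × Fin n) =>
      p.1.1 < p.2.1 ∧ p.2.2 < p.1.2 ∧ A p.1.1 p.1.2 = 1 ∧ A p.2.1 p.2.2 = 1)).card

/-- The conjugate of a matrix: columns in reversed (left-right flipped) order. -/
def conjM {m n : ℕ} (A : Matrix (Fin m) (Fin n) ℕ) : Matrix (Fin m) (Fin n) ℕ :=
  Matrix.of fun i j => A i j.rev

namespace PCaux

open Finset

/-! ### Block index machinery -/

/-- The element of `Fin (a*m)` corresponding to block `i`, position `k`. -/
def blk {a m : ℕ} (i : Fin a) (k : Fin m) : Fin (a * m) :=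
  finProdFinEquiv (i, k)

lemma blk_val {a m : ℕ} (i : Fin a) (k : Fin m) : (blk i k).1 = k.1 + m * i.1 := rfl

@[simp] lemma blk_divNat {a m : ℕ} (i : Fin a) (k : Fin m) : (blk i k).divNat = i := by
  have h := finProdFinEquiv.symm_apply_apply (i, k)
  rw [finProdFinEquiv_symm_apply] at h
  exact (Prod.ext_iff.mp h).1

@[simp] lemma blk_modNat {a m : ℕ} (i : Fin a) (k : Fin m) : (blk i k).modNat = k := by
  have h := finProdFinEquiv.symm_apply_apply (i, k)
  rw [finProdFinEquiv_symm_apply] at h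
  exact (Prod.ext_iff.mp h).2

lemma blk_eq {a m : ℕ} (t : Fin (a * m)) : blk t.divNat t.modNat = t := by
  have h := finProdFinEquiv.apply_symm_apply t
  rwa [finProdFinEquiv_symm_apply] at h

lemma blk_le_blk {a m : ℕ} {i i' : Fin a} {k k' : Fin m} :
    blk i' k' ≤ blk i k ↔ (i' < i ∨ (i' = i ∧ k' ≤ k)) := by
  have hk := k.2; have hk' := k'.2
  rw [Fin.le_def, blk_val, blk_val]
  constructor
  · intro h
    rcases Nat.lt_trichotomy i'.1 i.1 with hi | hi | hi
    · exact Or.inl (Fin.lt_def.mpr hi)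
    · refine Or.inr ⟨Fin.ext hi, Fin.le_def.mpr ?_⟩
      have : m * i'.1 = m * i.1 := by rw [hi]
      omega
    · exfalso
      have h1 : m * (i.1 + 1) ≤ m * i'.1 := Nat.mul_le_mul_left m hi
      rw [Nat.mul_succ] at h1
      omega
  · rintro (hi | ⟨hi, hkk⟩)
    · have h1 : m * (i'.1 + 1) ≤ m * i.1 := Nat.mul_le_mul_left m (Fin.lt_def.mp hi)
      rw [Nat.mul_succ] at h1
      omega
    · have h2 : m * i'.1 = m * i.1 := by rw [hi]
      have h3 := Fin.le_def.mp hkk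
      omega

lemma sum_blk {a m : ℕ} (F : Fin (a * m) → ℕ) :
    ∑ t, F t = ∑ i, ∑ k, F (blk i k) := by
  rw [← Equiv.sum_comp (finProdFinEquiv : Fin a × Fin m ≃ Fin (a * m)) F,
    Fintype.sum_prod_type]
  rfl

lemma sum_blk2 {a b m n : ℕ} (G : Fin (a * m) → Fin (b * n) → ℕ) :
    ∑ t, ∑ s, G t s = ∑ i : Fin a, ∑ k : Fin m, ∑ j : Fin b, ∑ l : Fin n,
      G (blk i k) (blk j l) := by
  rw [sum_blk (fun t => ∑ s, G t s)]
  refine Finset.sum_congr rfl fun i _ => Finset.sum_congr rfl fun k _ => ?_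
  exact sum_blk fun s => G (blk i k) s

/-! ### Partial sums of a matrix -/

/-- Total sum of all entries. -/
def tot {m n : ℕ} (X : Matrix (Fin m) (Fin n) ℕ) : ℕ := ∑ k, ∑ l, X k l

/-- Full rows, columns `0..l`. -/
def pcs {m n : ℕ} (X : Matrix (Fin m) (Fin n) ℕ) (l : Fin n) : ℕ :=
  ∑ k, ∑ l' ∈ Finset.univ.filter (fun l' : Fin n => l' ≤ l), X k l'

/-- Rows `0..k`, full columns. -/
def prs {m n : ℕ} (X : Matrix (Fin m) (Fin n) ℕ) (k : Fin m) : ℕ :=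
  ∑ k' ∈ Finset.univ.filter (fun k' : Fin m => k' ≤ k), ∑ l, X k' l

lemma tot_eq_rowSums {m n : ℕ} (X : Matrix (Fin m) (Fin n) ℕ) :
    tot X = ∑ k, rowSum X k := rfl

lemma pcs_eq_colSums {m n : ℕ} (X : Matrix (Fin m) (Fin n) ℕ) (l : Fin n) :
    pcs X l = ∑ l' ∈ Finset.univ.filter (fun l' : Fin n => l' ≤ l), colSum X l' :=
  Finset.sum_comm

lemma prs_eq_rowSums {m n : ℕ} (X : Matrix (Fin m) (Fin n) ℕ) (k : Fin m) :
    prs X k = ∑ k' ∈ Finset.univ.filter (fun k' : Fin m => k' ≤ k), rowSum X k' := rfl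

/-! ### The block matrix -/

/-- The block matrix whose `(i,j)` block is `f i j`. -/
def blockM {a b m n : ℕ} (f : Fin a → Fin b → Matrix (Fin m) (Fin n) ℕ) :
    Matrix (Fin (a * m)) (Fin (b * n)) ℕ :=
  Matrix.of fun t s => f t.divNat s.divNat t.modNat s.modNat

@[simp] lemma blockM_blk {a b m n : ℕ} (f : Fin a → Fin b → Matrix (Fin m) (Fin n) ℕ)
    (i : Fin a) (k : Fin m) (j : Fin b) (l : Fin n) :
    blockM f (blk i k) (blk j l) = f i j k l := by
  simp [blockM, blk_divNat, blk_modNat]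

lemma blockM_injective {a b m n : ℕ} :
    Function.Injective (blockM (a := a) (b := b) (m := m) (n := n)) := by
  intro f g h
  funext i j k l
  have := congrFun (congrFun h (blk i k)) (blk j l)
  rwa [show (blockM f (blk i k) (blk j l) = blockM g (blk i k) (blk j l)) ↔ (f i j k l = g i j k l) from by rw [blockM_blk, blockM_blk]] at this

/-! ### Decomposition of sigma for block matrices -/

lemma sigmaM_eq_ite {m n : ℕ} (X : Matrix (Fin m) (Fin n) ℕ) (i : Fin m) (j : Fin n) :
    sigmaM X i j = ∑ k, ∑ l, if k ≤ i ∧ l ≤ j then X k l else 0 := by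
  rw [sigmaM]
  simp only [Finset.sum_filter]
  refine Finset.sum_congr rfl fun k _ => ?_
  by_cases hk : k ≤ i
  · simp [hk]
  · simp [hk]

lemma split2 {a m : ℕ} (i : Fin a) (k : Fin m) (F : Fin a → Fin m → ℕ) :
    (∑ i', ∑ k', if i' < i ∨ (i' = i ∧ k' ≤ k) then F i' k' else 0)
    = (∑ i' ∈ Finset.univ.filter (fun i' => i' < i), ∑ k', F i' k')
      + ∑ k' ∈ Finset.univ.filter (fun k' => k' ≤ k), F i k' := by
  have h : ∀ i' : Fin a,
      (∑ k', if i' < i ∨ (i' = i ∧ k' ≤ k) then F i' k' else 0)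
      = (if i' < i then ∑ k', F i' k' else 0)
        + (if i' = i then ∑ k' ∈ Finset.univ.filter (fun k' => k' ≤ k), F i' k' else 0) := by
    intro i'
    rcases lt_trichotomy i' i with h' | h' | h'
    · simp [h', h'.ne]
    · subst h'
      simp [lt_irrefl, Finset.sum_filter]
    · simp [h'.ne', not_lt.mpr h'.le]
  rw [Finset.sum_congr rfl fun i' _ => h i', Finset.sum_add_distrib,
    Finset.sum_ite_eq' Finset.univ i
      (fun i' => ∑ k' ∈ Finset.univ.filter (fun k' => k' ≤ k), F i' k'),
    ← Finset.sum_filter]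
  simp

lemma sigma_blockM {a b m n : ℕ} (f : Fin a → Fin b → Matrix (Fin m) (Fin n) ℕ)
    (i : Fin a) (k : Fin m) (j : Fin b) (l : Fin n) :
    sigmaM (blockM f) (blk i k) (blk j l)
      = ((∑ i' ∈ Finset.univ.filter (fun i' => i' < i),
            ∑ j' ∈ Finset.univ.filter (fun j' => j' < j), tot (f i' j'))
        + ∑ i' ∈ Finset.univ.filter (fun i' => i' < i), pcs (f i' j) l)
        + ((∑ j' ∈ Finset.univ.filter (fun j' => j' < j), prs (f i j') k)
          + sigmaM (f i j) k l) := by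
  rw [sigmaM_eq_ite,
    sum_blk2 (fun t s => if t ≤ blk i k ∧ s ≤ blk j l then blockM f t s else 0)]
  simp only [blockM_blk, blk_le_blk]
  have step : ∀ (i' : Fin a) (k' : Fin m),
      (∑ j' : Fin b, ∑ l' : Fin n,
        if (i' < i ∨ (i' = i ∧ k' ≤ k)) ∧ (j' < j ∨ (j' = j ∧ l' ≤ l))
          then f i' j' k' l' else 0)
      = (if i' < i ∨ (i' = i ∧ k' ≤ k) then
          ((∑ j' ∈ Finset.univ.filter (fun j' => j' < j), ∑ l' : Fin n, f i' j' k' l')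
            + ∑ l' ∈ Finset.univ.filter (fun l' => l' ≤ l), f i' j k' l') else 0) := by
    intro i' k'
    by_cases h : i' < i ∨ (i' = i ∧ k' ≤ k)
    · simp only [h, if_true, true_and]
      exact split2 j l (fun j' l' => f i' j' k' l')
    · simp [h]
  simp only [step]
  rw [split2 i k (fun i' k' =>
    (∑ j' ∈ Finset.univ.filter (fun j' => j' < j), ∑ l' : Fin n, f i' j' k' l')
      + ∑ l' ∈ Finset.univ.filter (fun l' => l' ≤ l), f i' j k' l')]
  simp only [Finset.sum_add_distrib]
  congr 1
  · congr 1
    exact Finset.sum_congr rfl fun i' _ => Finset.sum_comm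
  · congr 1
    exact Finset.sum_comm

/-! ### Corner values -/

lemma filter_le_last {N : ℕ} (hN : 0 < N) :
    Finset.univ.filter (fun x : Fin N => x ≤ ⟨N - 1, by omega⟩) = Finset.univ := by
  ext x
  simp only [Finset.mem_filter, Finset.mem_univ, true_and, iff_true, Fin.le_def]
  have hx := x.2
  omega

lemma sum_split_le {N : ℕ} (i : Fin N) (g : Fin N → ℕ) :
    ∑ x ∈ Finset.univ.filter (fun x => x ≤ i), g x
      = (∑ x ∈ Finset.univ.filter (fun x => x < i), g x) + g i := by
  have h : Finset.univ.filter (fun x : Fin N => x ≤ i)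
      = insert i (Finset.univ.filter (fun x => x < i)) := by
    ext x
    simp only [Finset.mem_filter, Finset.mem_univ, true_and, Finset.mem_insert]
    constructor
    · intro hx
      rcases lt_or_eq_of_le hx with h' | h'
      · exact Or.inr h'
      · exact Or.inl h'
    · rintro (rfl | hx)
      · exact le_refl _
      · exact hx.le
  rw [h, Finset.sum_insert (by simp)]
  omega

lemma pcs_last {m n : ℕ} (hn : 0 < n) (X : Matrix (Fin m) (Fin n) ℕ) :
    pcs X ⟨n - 1, by omega⟩ = tot X := by
  rw [pcs, filter_le_last hn]; rfl

lemma prs_last {m n : ℕ} (hm : 0 < m) (X : Matrix (Fin m) (Fin n) ℕ) :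
    prs X ⟨m - 1, by omega⟩ = tot X := by
  rw [prs, filter_le_last hm]; rfl

lemma sigmaM_last {m n : ℕ} (hm : 0 < m) (hn : 0 < n) (X : Matrix (Fin m) (Fin n) ℕ) :
    sigmaM X ⟨m - 1, by omega⟩ ⟨n - 1, by omega⟩ = tot X := by
  rw [sigmaM, filter_le_last hm]
  refine Finset.sum_congr rfl fun k _ => ?_
  rw [filter_le_last hn]

lemma sigma_corner {a b m n : ℕ} (hm : 0 < m) (hn : 0 < n)
    (f : Fin a → Fin b → Matrix (Fin m) (Fin n) ℕ) (i : Fin a) (j : Fin b) :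
    sigmaM (blockM f) (blk i ⟨m - 1, by omega⟩) (blk j ⟨n - 1, by omega⟩)
      = ∑ i' ∈ Finset.univ.filter (fun i' => i' ≤ i),
          ∑ j' ∈ Finset.univ.filter (fun j' => j' ≤ j), tot (f i' j') := by
  rw [sigma_blockM, sigmaM_last hm hn]
  rw [Finset.sum_congr rfl (fun i' (_ : i' ∈ Finset.univ.filter (fun i' => i' < i)) =>
    pcs_last hn (f i' j))]
  rw [Finset.sum_congr rfl (fun j' (_ : j' ∈ Finset.univ.filter (fun j' => j' < j)) =>
    prs_last hm (f i j'))]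
  rw [sum_split_le i (fun i' => ∑ j' ∈ Finset.univ.filter (fun j' => j' ≤ j), tot (f i' j'))]
  rw [Finset.sum_congr rfl (fun i' (_ : i' ∈ Finset.univ.filter (fun i' => i' < i)) =>
    sum_split_le j (fun j' => tot (f i' j')))]
  rw [sum_split_le j (fun j' => tot (f i j'))]
  rw [Finset.sum_add_distrib]

/-! ### Counting lemmas -/

lemma sum_ite_count1 {b : ℕ} (v : Fin b → ℕ) (hv : ∀ j, v j = 0 ∨ v j = 1) (c d : ℕ) :
    ∑ j, (if v j = 1 then c else d)
      = (∑ j, v j) * c + (b - ∑ j, v j) * d := by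
  have key : ∀ j, (if v j = 1 then c else d) = v j * c + (1 - v j) * d := by
    intro j
    rcases hv j with h | h <;> simp [h]
  simp only [key]
  rw [Finset.sum_add_distrib, ← Finset.sum_mul, ← Finset.sum_mul]
  have h1 : (∑ j, (1 - v j)) + ∑ j, v j = b := by
    rw [← Finset.sum_add_distrib]
    have : ∀ j : Fin b, (1 - v j) + v j = 1 := by
      intro j; rcases hv j with h | h <;> simp [h]
    simp only [this, Finset.sum_const, Finset.card_univ, Fintype.card_fin, smul_eq_mul, mul_one]
  have h2 : (∑ j, (1 - v j)) = b - ∑ j, v j := by omega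
  rw [h2]

lemma sum_ite_count2 {α β : Type*} (s : Finset α) (t : Finset β) (v : α → β → ℕ)
    (hv : ∀ x ∈ s, ∀ y ∈ t, v x y = 0 ∨ v x y = 1) (c d : ℕ) :
    ∑ x ∈ s, ∑ y ∈ t, (if v x y = 1 then c else d)
      = (∑ x ∈ s, ∑ y ∈ t, v x y) * c
        + (s.card * t.card - ∑ x ∈ s, ∑ y ∈ t, v x y) * d := by
  have key : ∀ x ∈ s, ∀ y ∈ t, (if v x y = 1 then c else d) = v x y * c + (1 - v x y) * d := by
    intro x hx y hy
    rcases hv x hx y hy with h | h <;> simp [h]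
  rw [Finset.sum_congr rfl fun x hx => Finset.sum_congr rfl fun y hy => key x hx y hy]
  simp only [Finset.sum_add_distrib, ← Finset.sum_mul]
  have h1 : (∑ x ∈ s, ∑ y ∈ t, (1 - v x y)) + ∑ x ∈ s, ∑ y ∈ t, v x y = s.card * t.card := by
    rw [← Finset.sum_add_distrib]
    rw [Finset.sum_congr rfl fun x hx => (Finset.sum_add_distrib).symm]
    have : ∀ x ∈ s, ∑ y ∈ t, ((1 - v x y) + v x y) = t.card := by
      intro x hx
      rw [Finset.sum_congr rfl fun y hy => (by rcases hv x hx y hy with h | h <;> simp [h] :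
        (1 - v x y) + v x y = 1)]
      simp
    rw [Finset.sum_congr rfl this]
    simp [mul_comm]
  have h2 : (∑ x ∈ s, ∑ y ∈ t, (1 - v x y)) = s.card * t.card - ∑ x ∈ s, ∑ y ∈ t, v x y := by
    omega
  rw [h2]

lemma sum_le_cards {α β : Type*} (s : Finset α) (t : Finset β) (v : α → β → ℕ)
    (hv : ∀ x ∈ s, ∀ y ∈ t, v x y = 0 ∨ v x y = 1) :
    ∑ x ∈ s, ∑ y ∈ t, v x y ≤ s.card * t.card := by
  calc ∑ x ∈ s, ∑ y ∈ t, v x y ≤ ∑ x ∈ s, ∑ y ∈ t, 1 := by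
        refine Finset.sum_le_sum fun x hx => Finset.sum_le_sum fun y hy => ?_
        rcases hv x hx y hy with h | h <;> simp [h]
    _ = s.card * t.card := by simp [mul_comm]

/-! ### Monotonicity of the corner value -/

lemma corner_mono {x y c u v : ℕ} (hy : y ≤ c) (hxy : x < y) (huv : v < u) :
    x * u + (c - x) * v < y * u + (c - y) * v := by
  obtain ⟨d, hd, rfl⟩ : ∃ d, 0 < d ∧ y = x + d := ⟨y - x, by omega, by omega⟩
  obtain ⟨e, rfl⟩ : ∃ e, c = x + d + e := ⟨c - (x + d), by omega⟩
  have h1 : x + d + e - x = d + e := by omega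
  have h2 : x + d + e - (x + d) = e := by omega
  rw [h1, h2]
  have h3 : d * v < d * u := by
    have h4 := Nat.mul_lt_mul_of_pos_left huv hd
    nlinarith
  nlinarith

lemma corner_anti {x y c u v : ℕ} (hy : y ≤ c) (hxy : x < y) (huv : u < v) :
    y * u + (c - y) * v < x * u + (c - x) * v := by
  obtain ⟨d, hd, rfl⟩ : ∃ d, 0 < d ∧ y = x + d := ⟨y - x, by omega, by omega⟩
  obtain ⟨e, rfl⟩ : ∃ e, c = x + d + e := ⟨c - (x + d), by omega⟩
  have h1 : x + d + e - x = d + e := by omega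
  have h2 : x + d + e - (x + d) = e := by omega
  rw [h1, h2]
  have h3 : d * u < d * v := by
    have h4 := Nat.mul_lt_mul_of_pos_left huv hd
    nlinarith
  nlinarith

/-! ### Finiteness of classes -/

lemma classRS_finite {p q : ℕ} (R : Fin p → ℕ) (S : Fin q → ℕ) :
    (classRS R S).Finite := by
  apply Set.Finite.subset (Set.finite_range
    (fun B : Matrix (Fin p) (Fin q) Bool =>
      (Matrix.of fun i j => if B i j then 1 else 0 : Matrix (Fin p) (Fin q) ℕ)))
  rintro A ⟨hA, -, -⟩
  refine ⟨fun i j => decide (A i j = 1), ?_⟩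
  funext i j
  show (if decide (A i j = 1) = true then (1:ℕ) else 0) = A i j
  rcases hA i j with h | h <;> simp [h]

/-! ### Class facts -/

lemma tot_of_mem {m n : ℕ} {R : Fin m → ℕ} {S : Fin n → ℕ}
    {X : Matrix (Fin m) (Fin n) ℕ} (h : X ∈ classRS R S) :
    tot X = ∑ k, R k := by
  rw [tot_eq_rowSums]
  exact Finset.sum_congr rfl fun k _ => h.2.1 k

lemma pcs_congr {m n : ℕ} {R R' : Fin m → ℕ} {S : Fin n → ℕ}
    {X Y : Matrix (Fin m) (Fin n) ℕ} (hX : X ∈ classRS R S) (hY : Y ∈ classRS R' S)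
    (l : Fin n) : pcs X l = pcs Y l := by
  rw [pcs_eq_colSums, pcs_eq_colSums]
  refine Finset.sum_congr rfl fun l' _ => ?_
  rw [hX.2.2 l', hY.2.2 l']

lemma prs_congr {m n : ℕ} {R : Fin m → ℕ} {S S' : Fin n → ℕ}
    {X Y : Matrix (Fin m) (Fin n) ℕ} (hX : X ∈ classRS R S) (hY : Y ∈ classRS R S')
    (k : Fin m) : prs X k = prs Y k := by
  rw [prs_eq_rowSums, prs_eq_rowSums]
  refine Finset.sum_congr rfl fun k' _ => ?_
  rw [hX.2.1 k', hY.2.1 k']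

lemma not_brle_iff {m n : ℕ} {A C : Matrix (Fin m) (Fin n) ℕ} :
    ¬ brle A C ↔ ∃ i j, sigmaM A i j < sigmaM C i j := by
  rw [brle]
  push_neg
  rfl

end PCaux

open PCaux

set_option maxHeartbeats 2000000

/-- product construction: if `D₁, D₂, D₃` are antichains in the
Bruhat orders of `A(R₁,S₁)`, `A(R₂,S₂)`, `A(R₃,S₃)` respectively, with
`rᵢ ≤ b`, `sⱼ ≤ a`, and `u' = Σ r'ₖ ≠ Σ r''ₖ = u''`, then there is an
antichain of size `|D₁|·|D₂|^u·|D₃|^{ab−u}` (where `u = Σ rᵢ`) in the Bruhat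
order of `A(R,S)`, where the entry of `R` with 0-based index `t` (block `t/m`,
position `t%m`) is `r_{t/m}·r'_{t%m} + (b − r_{t/m})·r''_{t%m}`, and
similarly for `S`. -/
theorem product_construction (a b m n : ℕ)
    (ha : 0 < a) (hb : 0 < b) (hm : 0 < m) (hn : 0 < n)
    (R₁ : Fin a → ℕ) (S₁ : Fin b → ℕ)
    (R₂ R₃ : Fin m → ℕ) (S₂ S₃ : Fin n → ℕ)
    (hR₁b : ∀ i, R₁ i ≤ b) (hS₁a : ∀ j, S₁ j ≤ a)
    (huu : (∑ k, R₂ k) ≠ (∑ k, R₃ k))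
    (D₁ : Set (Matrix (Fin a) (Fin b) ℕ))
    (D₂ D₃ : Set (Matrix (Fin m) (Fin n) ℕ))
    (hD₁ : D₁ ⊆ classRS R₁ S₁) (hD₂ : D₂ ⊆ classRS R₂ S₂)
    (hD₃ : D₃ ⊆ classRS R₃ S₃)
    (hA₁ : IsAntichainB D₁) (hA₂ : IsAntichainB D₂) (hA₃ : IsAntichainB D₃) :
    ∃ D : Set (Matrix (Fin (a*m)) (Fin (b*n)) ℕ),
      D ⊆ classRS
        (fun t : Fin (a*m) =>
          R₁ ⟨t.1 / m, Nat.div_lt_of_lt_mul (Nat.mul_comm a m ▸ t.2)⟩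
              * R₂ ⟨t.1 % m, Nat.mod_lt t.1 hm⟩
            + (b - R₁ ⟨t.1 / m, Nat.div_lt_of_lt_mul (Nat.mul_comm a m ▸ t.2)⟩)
              * R₃ ⟨t.1 % m, Nat.mod_lt t.1 hm⟩)
        (fun t : Fin (b*n) =>
          S₁ ⟨t.1 / n, Nat.div_lt_of_lt_mul (Nat.mul_comm b n ▸ t.2)⟩
              * S₂ ⟨t.1 % n, Nat.mod_lt t.1 hn⟩
            + (a - S₁ ⟨t.1 / n, Nat.div_lt_of_lt_mul (Nat.mul_comm b n ▸ t.2)⟩)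
              * S₃ ⟨t.1 % n, Nat.mod_lt t.1 hn⟩)
      ∧ IsAntichainB D
      ∧ D.ncard = D₁.ncard * D₂.ncard ^ (∑ i, R₁ i)
          * D₃.ncard ^ (a*b - ∑ i, R₁ i) := by
  classical
  have hf₁ : D₁.Finite := (classRS_finite R₁ S₁).subset hD₁
  have hf₂ : D₂.Finite := (classRS_finite R₂ S₂).subset hD₂
  have hf₃ : D₃.Finite := (classRS_finite R₃ S₃).subset hD₃
  set F₁ := hf₁.toFinset with hF₁
  set F₂ := hf₂.toFinset with hF₂
  set F₃ := hf₃.toFinset with hF₃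
  set valid : Matrix (Fin a) (Fin b) ℕ → Finset (Fin a → Fin b → Matrix (Fin m) (Fin n) ℕ) :=
    fun A => Fintype.piFinset (fun i => Fintype.piFinset (fun j =>
      if A i j = 1 then F₂ else F₃)) with hvalid
  have hmem_valid : ∀ A f, f ∈ valid A ↔
      ∀ i j, f i j ∈ (if A i j = 1 then F₂ else F₃) := by
    intro A f
    rw [hvalid]
    constructor
    · intro h i j
      exact Fintype.mem_piFinset.mp (Fintype.mem_piFinset.mp h i) j
    · intro h
      exact Fintype.mem_piFinset.mpr fun i => Fintype.mem_piFinset.mpr fun j => h i j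
  have hvalid_class : ∀ {A f}, f ∈ valid A → ∀ i j,
      (A i j = 1 ∧ f i j ∈ D₂ ∧ f i j ∈ classRS R₂ S₂)
        ∨ (A i j ≠ 1 ∧ f i j ∈ D₃ ∧ f i j ∈ classRS R₃ S₃) := by
    intro A f hf i j
    have h0 := (hmem_valid A f).mp hf i j
    by_cases h : A i j = 1
    · rw [if_pos h] at h0
      have h2 : f i j ∈ D₂ := hf₂.mem_toFinset.mp h0
      exact Or.inl ⟨h, h2, hD₂ h2⟩
    · rw [if_neg h] at h0
      have h2 : f i j ∈ D₃ := hf₃.mem_toFinset.mp h0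
      exact Or.inr ⟨h, h2, hD₃ h2⟩
  have htot : ∀ {A f}, f ∈ valid A → ∀ i j,
      tot (f i j) = if A i j = 1 then (∑ k, R₂ k) else (∑ k, R₃ k) := by
    intro A f hf i j
    rcases hvalid_class hf i j with ⟨h, _, hc⟩ | ⟨h, _, hc⟩
    · rw [if_pos h, tot_of_mem hc]
    · rw [if_neg h, tot_of_mem hc]
  have huniq : ∀ {A C : Matrix (Fin a) (Fin b) ℕ} {f}, A ∈ D₁ → C ∈ D₁ →
      f ∈ valid A → f ∈ valid C → A = C := by
    intro A C f hA hC hfA hfC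
    by_contra hne
    obtain ⟨i, hi⟩ := Function.ne_iff.mp hne
    obtain ⟨j, hij⟩ := Function.ne_iff.mp hi
    have h1 := htot hfA i j
    have h2 := htot hfC i j
    rcases (hD₁ hA).1 i j with hA0 | hA1 <;> rcases (hD₁ hC).1 i j with hC0 | hC1
    · exact hij (by rw [hA0, hC0])
    · rw [if_neg (by omega), ] at h1
      rw [if_pos hC1] at h2
      exact huu (by omega)
    · rw [if_pos hA1] at h1
      rw [if_neg (by omega)] at h2
      exact huu (by omega)
    · exact hij (by rw [hA1, hC1])
  set G : Finset (Matrix (Fin (a*m)) (Fin (b*n)) ℕ) :=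
    F₁.biUnion (fun A => (valid A).image blockM) with hG
  have hGmem : ∀ X ∈ G, ∃ A f, A ∈ D₁ ∧ f ∈ valid A ∧ X = blockM f := by
    intro X hX
    rw [hG, Finset.mem_biUnion] at hX
    obtain ⟨A, hA, hX⟩ := hX
    obtain ⟨f, hf, rfl⟩ := Finset.mem_image.mp hX
    exact ⟨A, f, hf₁.mem_toFinset.mp hA, hf, rfl⟩
  refine ⟨(↑G : Set _), ?_, ?_, ?_⟩
  · -- subset of the class
    intro X hX
    obtain ⟨A, f, hA, hf, rfl⟩ := hGmem X hX
    have hAc := hD₁ hA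
    refine ⟨?_, ?_, ?_⟩
    · intro t s
      rcases hvalid_class hf t.divNat s.divNat with ⟨_, _, hc⟩ | ⟨_, _, hc⟩ <;>
        exact hc.1 t.modNat s.modNat
    · intro t
      have e1 : rowSum (blockM f) t = ∑ j : Fin b, rowSum (f t.divNat j) t.modNat := by
        rw [rowSum, sum_blk (fun s => blockM f t s)]
        refine Finset.sum_congr rfl fun j _ => Finset.sum_congr rfl fun l _ => ?_
        show f t.divNat (blk j l).divNat t.modNat (blk j l).modNat = _
        rw [blk_divNat, blk_modNat]
      have e2 : ∀ j : Fin b, rowSum (f t.divNat j) t.modNat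
          = if A t.divNat j = 1 then R₂ t.modNat else R₃ t.modNat := by
        intro j
        rcases hvalid_class hf t.divNat j with ⟨h, _, hc⟩ | ⟨h, _, hc⟩
        · rw [if_pos h, hc.2.1]
        · rw [if_neg h, hc.2.1]
      have e3 : ∑ j : Fin b, A t.divNat j = R₁ t.divNat := hAc.2.1 t.divNat
      have e4 := sum_ite_count1 (fun j => A t.divNat j) (fun j => hAc.1 t.divNat j)
        (R₂ t.modNat) (R₃ t.modNat)
      rw [e1, Finset.sum_congr rfl fun j _ => e2 j, e4, e3]
      rfl
    · intro s
      have e1 : colSum (blockM f) s = ∑ i : Fin a, colSum (f i s.divNat) s.modNat := by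
        rw [colSum, sum_blk (fun t => blockM f t s)]
        refine Finset.sum_congr rfl fun i _ => Finset.sum_congr rfl fun k _ => ?_
        show f (blk i k).divNat s.divNat (blk i k).modNat s.modNat = _
        rw [blk_divNat, blk_modNat]
      have e2 : ∀ i : Fin a, colSum (f i s.divNat) s.modNat
          = if A i s.divNat = 1 then S₂ s.modNat else S₃ s.modNat := by
        intro i
        rcases hvalid_class hf i s.divNat with ⟨h, _, hc⟩ | ⟨h, _, hc⟩
        · rw [if_pos h, hc.2.2]
        · rw [if_neg h, hc.2.2]
      have e3 : ∑ i : Fin a, A i s.divNat = S₁ s.divNat := hAc.2.2 s.divNat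
      have e4 := sum_ite_count1 (fun i => A i s.divNat) (fun i => hAc.1 i s.divNat)
        (S₂ s.modNat) (S₃ s.modNat)
      rw [e1, Finset.sum_congr rfl fun i _ => e2 i, e4, e3]
      rfl
  · -- antichain
    intro X hX Y hY hne
    obtain ⟨A, f, hA, hf, rfl⟩ := hGmem X hX
    obtain ⟨C, g, hC, hg, rfl⟩ := hGmem Y hY
    by_cases hAC : A = C
    · subst hAC
      have hfg : f ≠ g := fun h => hne (by rw [h])
      obtain ⟨i, hi⟩ := Function.ne_iff.mp hfg
      obtain ⟨j, hij⟩ := Function.ne_iff.mp hi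
      have hinc : Incomp (f i j) (g i j) := by
        rcases hvalid_class hf i j with ⟨h1, hm2, _⟩ | ⟨h1, hm3, _⟩
        · rcases hvalid_class hg i j with ⟨_, hm2', _⟩ | ⟨h1', _, _⟩
          · exact hA₂ _ hm2 _ hm2' hij
          · exact absurd h1 h1'
        · rcases hvalid_class hg i j with ⟨h1', _, _⟩ | ⟨_, hm3', _⟩
          · exact absurd h1' h1
          · exact hA₃ _ hm3 _ hm3' hij
      have hdiff : ∀ (k : Fin m) (l : Fin n),
          sigmaM (blockM f) (blk i k) (blk j l) + sigmaM (g i j) k l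
            = sigmaM (blockM g) (blk i k) (blk j l) + sigmaM (f i j) k l := by
        intro k l
        rw [sigma_blockM f i k j l, sigma_blockM g i k j l]
        have e1 : (∑ i' ∈ Finset.univ.filter (fun i' => i' < i),
              ∑ j' ∈ Finset.univ.filter (fun j' => j' < j), tot (f i' j'))
            = (∑ i' ∈ Finset.univ.filter (fun i' => i' < i),
              ∑ j' ∈ Finset.univ.filter (fun j' => j' < j), tot (g i' j')) := by
          refine Finset.sum_congr rfl fun i' _ => Finset.sum_congr rfl fun j' _ => ?_
          rw [htot hf i' j', htot hg i' j']
        have e2 : (∑ i' ∈ Finset.univ.filter (fun i' => i' < i), pcs (f i' j) l)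
            = (∑ i' ∈ Finset.univ.filter (fun i' => i' < i), pcs (g i' j) l) := by
          refine Finset.sum_congr rfl fun i' _ => ?_
          rcases hvalid_class hf i' j with ⟨h1, _, hc⟩ | ⟨h1, _, hc⟩ <;>
            rcases hvalid_class hg i' j with ⟨h1', _, hc'⟩ | ⟨h1', _, hc'⟩
          · exact pcs_congr hc hc' l
          · exact absurd h1 h1'
          · exact absurd h1' h1
          · exact pcs_congr hc hc' l
        have e3 : (∑ j' ∈ Finset.univ.filter (fun j' => j' < j), prs (f i j') k)
            = (∑ j' ∈ Finset.univ.filter (fun j' => j' < j), prs (g i j') k) := by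
          refine Finset.sum_congr rfl fun j' _ => ?_
          rcases hvalid_class hf i j' with ⟨h1, _, hc⟩ | ⟨h1, _, hc⟩ <;>
            rcases hvalid_class hg i j' with ⟨h1', _, hc'⟩ | ⟨h1', _, hc'⟩
          · exact prs_congr hc hc' k
          · exact absurd h1 h1'
          · exact absurd h1' h1
          · exact prs_congr hc hc' k
        rw [e1, e2, e3]
        omega
      constructor
      · obtain ⟨k, l, hkl⟩ := not_brle_iff.mp hinc.1
        refine not_brle_iff.mpr ⟨blk i k, blk j l, ?_⟩
        have := hdiff k l
        omega
      · obtain ⟨k, l, hkl⟩ := not_brle_iff.mp hinc.2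
        refine not_brle_iff.mpr ⟨blk i k, blk j l, ?_⟩
        have := hdiff k l
        omega
    · have hincAC := hA₁ A hA C hC hAC
      have hval : ∀ (B : Matrix (Fin a) (Fin b) ℕ)
          (h : Fin a → Fin b → Matrix (Fin m) (Fin n) ℕ), B ∈ D₁ → h ∈ valid B →
          ∀ (p : Fin a) (q : Fin b),
          sigmaM (blockM h) (blk p ⟨m - 1, by omega⟩) (blk q ⟨n - 1, by omega⟩)
            = sigmaM B p q * (∑ k, R₂ k)
              + ((Finset.univ.filter (fun x => x ≤ p)).card
                  * (Finset.univ.filter (fun x => x ≤ q)).card - sigmaM B p q)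
                * (∑ k, R₃ k) := by
        intro B h hB hh p q
        rw [sigma_corner hm hn,
          Finset.sum_congr rfl fun i' _ => Finset.sum_congr rfl fun j' _ => htot hh i' j',
          sum_ite_count2 _ _ (fun i' j' => B i' j')
            (fun i' _ j' _ => (hD₁ hB).1 i' j') (∑ k, R₂ k) (∑ k, R₃ k)]
        rfl
      have hbound : ∀ (B : Matrix (Fin a) (Fin b) ℕ), B ∈ D₁ → ∀ (p : Fin a) (q : Fin b),
          sigmaM B p q ≤ (Finset.univ.filter (fun x : Fin a => x ≤ p)).card
            * (Finset.univ.filter (fun x : Fin b => x ≤ q)).card := by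
        intro B hB p q
        exact sum_le_cards _ _ _ (fun i' _ j' _ => (hD₁ hB).1 i' j')
      obtain ⟨p, q, h1⟩ := not_brle_iff.mp hincAC.1
      obtain ⟨p', q', h2⟩ := not_brle_iff.mp hincAC.2
      have hv1 := hval A f hA hf p q
      have hv2 := hval C g hC hg p q
      have hv3 := hval A f hA hf p' q'
      have hv4 := hval C g hC hg p' q'
      rcases lt_or_gt_of_ne huu with hlt | hgt
      · -- u' < u'' : corner value strictly decreasing in sigma
        constructor
        · refine not_brle_iff.mpr ⟨blk p' ⟨m - 1, by omega⟩, blk q' ⟨n - 1, by omega⟩, ?_⟩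
          rw [hv3, hv4]
          exact corner_anti (hbound A hA p' q') h2 hlt
        · refine not_brle_iff.mpr ⟨blk p ⟨m - 1, by omega⟩, blk q ⟨n - 1, by omega⟩, ?_⟩
          rw [hv1, hv2]
          exact corner_anti (hbound C hC p q) h1 hlt
      · -- u'' < u' : strictly increasing
        constructor
        · refine not_brle_iff.mpr ⟨blk p ⟨m - 1, by omega⟩, blk q ⟨n - 1, by omega⟩, ?_⟩
          rw [hv1, hv2]
          exact corner_mono (hbound C hC p q) h1 hgt
        · refine not_brle_iff.mpr ⟨blk p' ⟨m - 1, by omega⟩, blk q' ⟨n - 1, by omega⟩, ?_⟩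
          rw [hv3, hv4]
          exact corner_mono (hbound A hA p' q') h2 hgt
  · -- cardinality
    rw [Set.ncard_coe_finset]
    have hdisj : ∀ A ∈ F₁, ∀ C ∈ F₁, A ≠ C →
        Disjoint ((valid A).image blockM) ((valid C).image blockM) := by
      intro A hA C hC hne
      rw [Finset.disjoint_left]
      intro X hXA hXC
      obtain ⟨f, hfv, rfl⟩ := Finset.mem_image.mp hXA
      obtain ⟨g, hgv, hEq⟩ := Finset.mem_image.mp hXC
      have hgf : g = f := blockM_injective hEq
      subst hgf
      exact hne (huniq (hf₁.mem_toFinset.mp hA) (hf₁.mem_toFinset.mp hC) hfv hgv)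
    rw [hG, Finset.card_biUnion hdisj]
    have hcardA : ∀ A ∈ F₁, ((valid A).image blockM).card
        = F₂.card ^ (∑ i, R₁ i) * F₃.card ^ (a * b - ∑ i, R₁ i) := by
      intro A hA
      have hAc := hD₁ (hf₁.mem_toFinset.mp hA)
      rw [Finset.card_image_of_injective _ blockM_injective, hvalid]
      rw [Fintype.card_piFinset]
      rw [Finset.prod_congr rfl fun i _ => Fintype.card_piFinset
        (fun j => if A i j = 1 then F₂ else F₃)]
      have key : ∀ (i : Fin a) (j : Fin b),
          (if A i j = 1 then F₂ else F₃).card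
            = F₂.card ^ A i j * F₃.card ^ (1 - A i j) := by
        intro i j
        rcases hAc.1 i j with h | h <;> simp [h]
      rw [Finset.prod_congr rfl fun i _ => Finset.prod_congr rfl fun j _ => key i j]
      rw [Finset.prod_congr rfl fun i (_ : i ∈ Finset.univ) => Finset.prod_mul_distrib]
      rw [Finset.prod_mul_distrib]
      rw [Finset.prod_congr rfl fun i (_ : i ∈ Finset.univ) =>
        Finset.prod_pow_eq_pow_sum Finset.univ (fun j => A i j) F₂.card]
      rw [Finset.prod_congr rfl fun i (_ : i ∈ Finset.univ) =>
        Finset.prod_pow_eq_pow_sum Finset.univ (fun j => 1 - A i j) F₃.card]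
      rw [Finset.prod_pow_eq_pow_sum Finset.univ (fun i => ∑ j, A i j) F₂.card]
      rw [Finset.prod_pow_eq_pow_sum Finset.univ (fun i => ∑ j, (1 - A i j)) F₃.card]
      have hones : (∑ i, ∑ j, A i j) = ∑ i, R₁ i :=
        Finset.sum_congr rfl fun i _ => hAc.2.1 i
      have hzeros : (∑ i, ∑ j, (1 - A i j)) = a * b - ∑ i, R₁ i := by
        have h1 : ∀ i : Fin a, (∑ j, (1 - A i j)) + ∑ j, A i j = b := by
          intro i
          rw [← Finset.sum_add_distrib]
          have : ∀ j : Fin b, (1 - A i j) + A i j = 1 := by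
            intro j; rcases hAc.1 i j with h | h <;> simp [h]
          simp [this]
        have h2 : (∑ i, ∑ j, (1 - A i j)) + ∑ i, ∑ j, A i j = a * b := by
          rw [← Finset.sum_add_distrib, Finset.sum_congr rfl fun i _ => h1 i]
          simp [mul_comm]
        omega
      rw [hones, hzeros]
    rw [Finset.sum_congr rfl hcardA, Finset.sum_const, smul_eq_mul]
    have hc1 : D₁.ncard = F₁.card := Set.ncard_eq_toFinset_card D₁ hf₁
    have hc2 : D₂.ncard = F₂.card := Set.ncard_eq_toFinset_card D₂ hf₂
    have hc3 : D₃.ncard = F₃.card := Set.ncard_eq_toFinset_card D₃ hf₃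
    rw [hc1, hc2, hc3, mul_assoc]
end

section
/- Let a and m be positive integers where a is even, and let n = am. If D_1 is an antichain in the Bruhat order of A(a, a/2) and D_2 is an antichain in the Bruhat order of A(m, 2), then there is an antichain of size |D_1|·|D_2|^{a²} in the Bruhat order of A(n, n/2). -/
/-!
Replace each entry of `A ∈ D₁` by an `m × m` block chosen freely from `D₂` and passed through
`g₁ : A(m,2) → A(m,k₁)` where `A` has a `1`, through `g₀ : A(m,2) → A(m,k₀)` where it has a `0`;
when `k₁ + k₀ = m` this gives a matrix of `A(am, am/2)`. For two such matrices whose blocks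
have equal line sums, `σ` differs only by `σ` of the block containing the position, so two
choices of blocks for the same `A` give incomparable matrices as soon as `g₁` and `g₀` preserve
incomparability. At the lower right corners of the blocks, `σ` is an affine function of `σ_A`
with slope `m (k₁ - k₀)`, so incomparable `A, A'` give incomparable matrices when `k₁ ≠ k₀`.

For `m ≠ 4` take `g₁ = id` and `g₀ X = J - X`. For `m = 4` these weights coincide; instead,
ranking `A(4,2)` by `∑ σ`, send `X` to the element of rank `48` (for `g₁`) or `52` (for `g₀`) of
its chain in a partition of `A(4,2)` into 13 chains. Incomparable matrices lie on different chains,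
so they go to distinct elements of one rank, which are incomparable. Matrices of rank `48` never
lie below matrices of rank `52`, and a row in which `A` and `A'` differ has a block where `A` has
`1` and `A'` has `0`, and one the other way round.
-/

open Finset

namespace Bruhat

variable {a m n : ℕ}

instance (A C : Matrix (Fin m) (Fin n) ℕ) : Decidable (brle A C) :=
  inferInstanceAs (Decidable (∀ i j, _))

-- `inferInstanceAs` fails here: instance search does not see through `Matrix`.
instance (X : Matrix (Fin m) (Fin n) ℕ) : Decidable (ZeroOne X) :=
  @Fintype.decidableForallFintype _ _
    (fun _ => @Fintype.decidableForallFintype _ _ (fun _ => instDecidableOr) _) _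

instance (X : Matrix (Fin n) (Fin n) ℕ) (k : ℕ) : Decidable (X ∈ classA n k) :=
  inferInstanceAs (Decidable (_ ∧ _ ∧ _))

lemma not_brle_iff {A C : Matrix (Fin m) (Fin n) ℕ} :
    ¬ brle A C ↔ ∃ i j, sigmaM A i j < sigmaM C i j := by
  simp [brle]

lemma brle_refl (A : Matrix (Fin m) (Fin n) ℕ) : brle A A := fun _ _ => le_rfl

lemma _root_.Incomp.ne {A C : Matrix (Fin m) (Fin n) ℕ} (h : Incomp A C) : A ≠ C := by
  rintro rfl
  exact h.1 (brle_refl A)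

lemma eq_of_sum_Iic_eq {f g : Fin n → ℕ} (h : ∀ j, ∑ l ∈ Iic j, f l = ∑ l ∈ Iic j, g l) :
    f = g := by
  funext j
  induction j using Fin.strong_induction_on with
  | h j ih =>
    have hj := h j
    rw [← Iio_insert, sum_insert notMem_Iio_self, sum_insert notMem_Iio_self,
      sum_congr rfl fun l hl => ih l (mem_Iio.mp hl)] at hj
    exact Nat.add_right_cancel hj

lemma sigmaM_eq_sum_Iic (A : Matrix (Fin m) (Fin n) ℕ) (i : Fin m) (j : Fin n) :
    sigmaM A i j = ∑ k ∈ Iic i, ∑ l ∈ Iic j, A k l := by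
  simp only [sigmaM, filter_ge_eq_Iic]

lemma brle_antisymm {A C : Matrix (Fin m) (Fin n) ℕ} (hAC : brle A C) (hCA : brle C A) :
    A = C := by
  have hσ : ∀ i j, sigmaM A i j = sigmaM C i j := fun i j => le_antisymm (hCA i j) (hAC i j)
  simp only [sigmaM_eq_sum_Iic] at hσ
  have hrows : ∀ j k, ∑ l ∈ Iic j, A k l = ∑ l ∈ Iic j, C k l := fun j =>
    congrFun (eq_of_sum_Iic_eq (f := fun k => ∑ l ∈ Iic j, A k l) fun i => hσ i j)
  funext k
  exact eq_of_sum_Iic_eq fun j => hrows j k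

def sigmaTotal (A : Matrix (Fin m) (Fin n) ℕ) : ℕ :=
  ∑ x : Fin m × Fin n, sigmaM A x.1 x.2

lemma sigmaTotal_le_of_brle {A C : Matrix (Fin m) (Fin n) ℕ} (h : brle A C) :
    sigmaTotal C ≤ sigmaTotal A :=
  sum_le_sum fun x _ => h x.1 x.2

lemma incomp_of_sigmaTotal_eq {A C : Matrix (Fin m) (Fin n) ℕ}
    (h : sigmaTotal A = sigmaTotal C) (hne : A ≠ C) : Incomp A C := by
  have hnot : ∀ {A C : Matrix (Fin m) (Fin n) ℕ}, sigmaTotal A = sigmaTotal C → A ≠ C →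
      ¬ brle A C := by
    intro A C h hne hAC
    have hσ := (sum_eq_sum_iff_of_le fun x _ => hAC x.1 x.2).mp h.symm
    exact hne (brle_antisymm hAC fun i j => (hσ (i, j) (mem_univ _)).ge)
  exact ⟨hnot h hne, hnot h.symm hne.symm⟩

lemma not_brle_of_sigmaTotal_lt {A C : Matrix (Fin m) (Fin n) ℕ}
    (h : sigmaTotal A < sigmaTotal C) : ¬ brle A C :=
  fun hAC => (sigmaTotal_le_of_brle hAC).not_gt h

lemma _root_.Incomp.of_sigmaM_sub_eq_mul {m' n' : ℕ} {A A' : Matrix (Fin m) (Fin n) ℕ}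
    {M M' : Matrix (Fin m') (Fin n') ℕ} (f : Fin m → Fin m') (g : Fin n → Fin n') {c : ℤ}
    (hc : c ≠ 0)
    (h : ∀ i j, (sigmaM M (f i) (g j) : ℤ) - sigmaM M' (f i) (g j) =
      c * ((sigmaM A i j : ℤ) - sigmaM A' i j))
    (hA : Incomp A A') : Incomp M M' := by
  obtain ⟨i₁, j₁, h₁⟩ := not_brle_iff.mp hA.1
  obtain ⟨i₂, j₂, h₂⟩ := not_brle_iff.mp hA.2
  have e₁ := h i₁ j₁
  have e₂ := h i₂ j₂
  simp only [Incomp, not_brle_iff]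
  rcases hc.lt_or_gt with hc | hc
  · refine ⟨⟨f i₂, g j₂, ?_⟩, ⟨f i₁, g j₁, ?_⟩⟩ <;> zify at h₁ h₂ ⊢ <;> nlinarith
  · refine ⟨⟨f i₁, g j₁, ?_⟩, ⟨f i₂, g j₂, ?_⟩⟩ <;> zify at h₁ h₂ ⊢ <;> nlinarith

lemma le_of_mem_classA {X : Matrix (Fin m) (Fin m) ℕ} {k : ℕ} (hm : 0 < m)
    (hX : X ∈ classA m k) : k ≤ m := by
  calc k = rowSum X ⟨0, hm⟩ := (hX.2.1 _).symm
    _ ≤ ∑ _j : Fin m, 1 :=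
        sum_le_sum fun j _ => by rcases hX.1 ⟨0, hm⟩ j with h | h <;> simp [h]
    _ = m := by simp

def compl (X : Matrix (Fin m) (Fin n) ℕ) : Matrix (Fin m) (Fin n) ℕ :=
  Matrix.of fun i j => 1 - X i j

lemma compl_add_cancel {X : Matrix (Fin m) (Fin n) ℕ} (hX : ZeroOne X) (i : Fin m) (j : Fin n) :
    compl X i j + X i j = 1 := by
  rcases hX i j with h | h <;> simp [compl, h]

lemma sigmaM_compl_add {X : Matrix (Fin m) (Fin n) ℕ} (hX : ZeroOne X) (i : Fin m) (j : Fin n) :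
    sigmaM (compl X) i j + sigmaM X i j = sigmaM (Matrix.of fun _ _ => 1) i j := by
  simp only [sigmaM, ← sum_add_distrib, compl_add_cancel hX, Matrix.of_apply]

lemma incomp_compl {X Y : Matrix (Fin m) (Fin n) ℕ} (hX : ZeroOne X) (hY : ZeroOne Y)
    (h : Incomp X Y) : Incomp (compl X) (compl Y) :=
  Incomp.of_sigmaM_sub_eq_mul id id (c := -1) (by norm_num) (fun i j => by
    have eX := sigmaM_compl_add hX i j
    have eY := sigmaM_compl_add hY i j
    simp only [id]
    omega) h

lemma compl_mem_classA {X : Matrix (Fin m) (Fin m) ℕ} {k : ℕ} (hX : X ∈ classA m k) :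
    compl X ∈ classA m (m - k) := by
  obtain ⟨hz, hr, hc⟩ := hX
  refine ⟨fun i j => ?_, fun i => ?_, fun j => ?_⟩
  · rcases hz i j with h | h <;> simp [compl, h]
  · have h : rowSum (compl X) i + rowSum X i = m := by
      simp [rowSum, ← sum_add_distrib, compl_add_cancel hz]
    have := hr i
    simp only at this ⊢
    omega
  · have h : colSum (compl X) j + colSum X j = m := by
      simp [colSum, ← sum_add_distrib, compl_add_cancel hz]
    have := hc j
    simp only at this ⊢
    omega

def blockMatrix (G : Fin a → Fin a → Matrix (Fin m) (Fin m) ℕ) :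
    Matrix (Fin (a * m)) (Fin (a * m)) ℕ :=
  Matrix.of fun i j =>
    G (finProdFinEquiv.symm i).1 (finProdFinEquiv.symm j).1
      (finProdFinEquiv.symm i).2 (finProdFinEquiv.symm j).2

@[simp]
lemma blockMatrix_apply (G : Fin a → Fin a → Matrix (Fin m) (Fin m) ℕ) (p q : Fin a)
    (r s : Fin m) : blockMatrix G (finProdFinEquiv (p, r)) (finProdFinEquiv (q, s)) = G p q r s := by
  simp only [blockMatrix, Matrix.of_apply, Equiv.symm_apply_apply]

lemma finProdFinEquiv_le_iff {p p' : Fin a} {r r' : Fin m} :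
    finProdFinEquiv (p', r') ≤ finProdFinEquiv (p, r) ↔ p' < p ∨ p' = p ∧ r' ≤ r := by
  rw [Fin.le_def, Fin.lt_def, Fin.ext_iff, Fin.le_def]
  simp only [finProdFinEquiv_apply_val]
  have hr := r.isLt
  have hr' := r'.isLt
  rcases lt_trichotomy p'.val p.val with h | h | h
  · have := Nat.mul_le_mul_left m (Nat.succ_le_of_lt h)
    rw [Nat.mul_succ] at this
    omega
  · rw [h]
    omega
  · have := Nat.mul_le_mul_left m (Nat.succ_le_of_lt h)
    rw [Nat.mul_succ] at this
    omega

lemma Iic_finProdFinEquiv (p : Fin a) (r : Fin m) :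
    Iic (finProdFinEquiv (p, r)) =
      (Iio p ×ˢ univ ∪ {p} ×ˢ Iic r).map finProdFinEquiv.toEmbedding := by
  ext k
  obtain ⟨⟨p', r'⟩, rfl⟩ := finProdFinEquiv.surjective k
  simp [finProdFinEquiv_le_iff, eq_comm, and_comm]

lemma Iic_finProdFinEquiv_of_forall_le (p : Fin a) {r : Fin m} (hr : ∀ r', r' ≤ r) :
    Iic (finProdFinEquiv (p, r)) = (Iic p ×ˢ univ).map finProdFinEquiv.toEmbedding := by
  ext k
  obtain ⟨⟨p', r'⟩, rfl⟩ := finProdFinEquiv.surjective k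
  simp only [mem_Iic, mem_map_equiv, Equiv.symm_apply_apply, mem_product, mem_univ, and_true,
    finProdFinEquiv_le_iff, hr]
  exact le_iff_lt_or_eq.symm

lemma sum_Iic_finProdFinEquiv {β : Type*} [AddCommMonoid β] (f : Fin (a * m) → β)
    (p : Fin a) (r : Fin m) :
    ∑ k ∈ Iic (finProdFinEquiv (p, r)), f k =
      ∑ p' ∈ Iio p, ∑ r', f (finProdFinEquiv (p', r')) +
        ∑ r' ∈ Iic r, f (finProdFinEquiv (p, r')) := by
  rw [Iic_finProdFinEquiv, sum_map, sum_union, sum_product, sum_product, sum_singleton]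
  · rfl
  · simp only [disjoint_left, mem_product, mem_Iio, mem_singleton]
    rintro ⟨p', r'⟩ ⟨h, -⟩ ⟨rfl, -⟩
    exact lt_irrefl _ h

lemma sigmaM_blockMatrix (G : Fin a → Fin a → Matrix (Fin m) (Fin m) ℕ) (p q : Fin a)
    (r s : Fin m) :
    sigmaM (blockMatrix G) (finProdFinEquiv (p, r)) (finProdFinEquiv (q, s)) =
      ∑ p' ∈ Iio p, ∑ q' ∈ Iio q, ∑ r', rowSum (G p' q') r' +
        ∑ p' ∈ Iio p, ∑ s' ∈ Iic s, colSum (G p' q) s' +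
        ∑ q' ∈ Iio q, ∑ r' ∈ Iic r, rowSum (G p q') r' +
        sigmaM (G p q) r s := by
  simp only [sigmaM_eq_sum_Iic, sum_Iic_finProdFinEquiv, blockMatrix_apply, sum_add_distrib,
    rowSum, colSum]
  have h₁ : ∀ p', ∑ r', ∑ q' ∈ Iio q, ∑ s', G p' q' r' s' =
      ∑ q' ∈ Iio q, ∑ r', ∑ s', G p' q' r' s' := fun _ => sum_comm
  have h₂ : ∀ p', ∑ r', ∑ s' ∈ Iic s, G p' q r' s' = ∑ s' ∈ Iic s, ∑ r', G p' q r' s' :=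
    fun _ => sum_comm
  have h₃ : ∑ r' ∈ Iic r, ∑ q' ∈ Iio q, ∑ s', G p q' r' s' =
      ∑ q' ∈ Iio q, ∑ r' ∈ Iic r, ∑ s', G p q' r' s' := sum_comm
  simp only [h₁, h₂, h₃]
  ring

section Weights

variable {G G' : Fin a → Fin a → Matrix (Fin m) (Fin m) ℕ} {w : Fin a → Fin a → ℕ}

lemma sigmaM_blockMatrix_add_eq (hG : ∀ p q, G p q ∈ classA m (w p q))
    (hG' : ∀ p q, G' p q ∈ classA m (w p q)) (p q : Fin a) (r s : Fin m) :
    sigmaM (blockMatrix G) (finProdFinEquiv (p, r)) (finProdFinEquiv (q, s)) +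
        sigmaM (G' p q) r s =
      sigmaM (blockMatrix G') (finProdFinEquiv (p, r)) (finProdFinEquiv (q, s)) +
        sigmaM (G p q) r s := by
  simp only [sigmaM_blockMatrix, (hG _ _).2.1, (hG' _ _).2.1, (hG _ _).2.2, (hG' _ _).2.2]
  ring

lemma not_brle_blockMatrix (hG : ∀ p q, G p q ∈ classA m (w p q))
    (hG' : ∀ p q, G' p q ∈ classA m (w p q)) {p q : Fin a} (h : ¬ brle (G p q) (G' p q)) :
    ¬ brle (blockMatrix G) (blockMatrix G') := by
  obtain ⟨r, s, hrs⟩ := not_brle_iff.mp h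
  have := sigmaM_blockMatrix_add_eq hG hG' p q r s
  exact not_brle_iff.mpr ⟨finProdFinEquiv (p, r), finProdFinEquiv (q, s), by omega⟩

lemma sigmaM_blockMatrix_corner (hG : ∀ p q, G p q ∈ classA m (w p q)) (p q : Fin a)
    {r s : Fin m} (hr : ∀ r', r' ≤ r) (hs : ∀ s', s' ≤ s) :
    sigmaM (blockMatrix G) (finProdFinEquiv (p, r)) (finProdFinEquiv (q, s)) =
      m * ∑ p' ∈ Iic p, ∑ q' ∈ Iic q, w p' q' := by
  rw [sigmaM_eq_sum_Iic, Iic_finProdFinEquiv_of_forall_le p hr,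
    Iic_finProdFinEquiv_of_forall_le q hs]
  simp only [sum_map, sum_product, Equiv.coe_toEmbedding, blockMatrix_apply, mul_sum]
  refine sum_congr rfl fun p' _ => ?_
  rw [sum_comm]
  refine sum_congr rfl fun q' _ => ?_
  exact (sum_congr rfl fun r _ => (hG p' q').2.1 r).trans
    (by rw [sum_const, card_univ, Fintype.card_fin, smul_eq_mul])

lemma blockMatrix_mem_classA {k : ℕ} (hG : ∀ p q, G p q ∈ classA m (w p q))
    (hrow : ∀ p, ∑ q, w p q = k) (hcol : ∀ q, ∑ p, w p q = k) :
    blockMatrix G ∈ classA (a * m) k := by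
  refine ⟨fun i j => ?_, fun i => ?_, fun j => ?_⟩
  · obtain ⟨⟨p, r⟩, rfl⟩ := finProdFinEquiv.surjective i
    obtain ⟨⟨q, s⟩, rfl⟩ := finProdFinEquiv.surjective j
    rw [blockMatrix_apply]
    exact (hG p q).1 r s
  · obtain ⟨⟨p, r⟩, rfl⟩ := finProdFinEquiv.surjective i
    rw [rowSum, ← finProdFinEquiv.sum_comp, Fintype.sum_prod_type]
    simp only [blockMatrix_apply]
    exact (sum_congr rfl fun q _ => (hG p q).2.1 r).trans (hrow p)
  · obtain ⟨⟨q, s⟩, rfl⟩ := finProdFinEquiv.surjective j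
    rw [colSum, ← finProdFinEquiv.sum_comp, Fintype.sum_prod_type]
    simp only [blockMatrix_apply]
    exact (sum_congr rfl fun p _ => (hG p q).2.2 s).trans (hcol q)

end Weights

lemma exists_eq_one_and_eq_zero {f g : Fin n → ℕ} (hf : ∀ j, f j = 0 ∨ f j = 1)
    (hs : ∑ j, f j = ∑ j, g j) (hne : f ≠ g) : ∃ j, f j = 1 ∧ g j = 0 := by
  by_contra! h
  have hle : ∀ j ∈ univ, f j ≤ g j := fun j _ => by
    rcases hf j with h' | h'
    · omega
    · have := h j h'
      omega
  exact hne (funext fun j => (sum_eq_sum_iff_of_le hle).mp hs j (mem_univ j))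

lemma sum_ite_eq_half_mul {f : Fin a → ℕ} (ha : Even a) (hf : ∀ j, f j = 0 ∨ f j = 1)
    (hs : ∑ j, f j = a / 2) (k₁ k₀ : ℕ) :
    ∑ j, (if f j = 1 then k₁ else k₀) = a / 2 * (k₁ + k₀) := by
  have hones : #{j | f j = 1} = a / 2 := by
    rw [← hs, card_filter]
    exact sum_congr rfl fun j _ => by rcases hf j with h | h <;> simp [h]
  have hzeros : #{j | ¬ f j = 1} = a / 2 := by
    have := card_filter_add_card_filter_not (s := univ) (fun j => f j = 1)
    rw [card_univ, Fintype.card_fin] at this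
    obtain ⟨t, rfl⟩ := ha
    omega
  rw [sum_ite, sum_const, sum_const, hones, hzeros, smul_eq_mul, smul_eq_mul, mul_add]

def productMatrix (g₁ g₀ : Matrix (Fin m) (Fin m) ℕ → Matrix (Fin m) (Fin m) ℕ)
    (A : Matrix (Fin a) (Fin a) ℕ) (B : Fin a × Fin a → Matrix (Fin m) (Fin m) ℕ) :
    Matrix (Fin (a * m)) (Fin (a * m)) ℕ :=
  blockMatrix fun p q => if A p q = 1 then g₁ (B (p, q)) else g₀ (B (p, q))

section Product

variable {D₂ : Set (Matrix (Fin m) (Fin m) ℕ)}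
  {g₁ g₀ : Matrix (Fin m) (Fin m) ℕ → Matrix (Fin m) (Fin m) ℕ} {k₁ k₀ : ℕ}
  {B B' : Fin a × Fin a → Matrix (Fin m) (Fin m) ℕ}

lemma productMatrix_block_mem_classA (hg₁ : ∀ X ∈ D₂, g₁ X ∈ classA m k₁)
    (hg₀ : ∀ X ∈ D₂, g₀ X ∈ classA m k₀) (A : Matrix (Fin a) (Fin a) ℕ) (hB : ∀ x, B x ∈ D₂)
    (p q : Fin a) :
    (if A p q = 1 then g₁ (B (p, q)) else g₀ (B (p, q))) ∈
      classA m (if A p q = 1 then k₁ else k₀) := by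
  split_ifs
  exacts [hg₁ _ (hB _), hg₀ _ (hB _)]

lemma productMatrix_mem_classA (ha : Even a) (hk : k₁ + k₀ = m)
    (hg₁ : ∀ X ∈ D₂, g₁ X ∈ classA m k₁) (hg₀ : ∀ X ∈ D₂, g₀ X ∈ classA m k₀)
    {A : Matrix (Fin a) (Fin a) ℕ} (hA : A ∈ classA a (a / 2)) (hB : ∀ x, B x ∈ D₂) :
    productMatrix g₁ g₀ A B ∈ classA (a * m) (a * m / 2) := by
  have hk' : a / 2 * (k₁ + k₀) = a * m / 2 := by
    obtain ⟨t, rfl⟩ := ha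
    rw [hk, ← two_mul, Nat.mul_div_cancel_left _ two_pos, mul_assoc,
      Nat.mul_div_cancel_left _ two_pos]
  refine blockMatrix_mem_classA (productMatrix_block_mem_classA hg₁ hg₀ A hB)
    (fun p => ?_) (fun q => ?_)
  · rw [sum_ite_eq_half_mul ha (fun q => hA.1 p q) (hA.2.1 p), hk']
  · rw [sum_ite_eq_half_mul ha (fun p => hA.1 p q) (hA.2.2 q), hk']

lemma incomp_productMatrix_of_ne (hg₁ : ∀ X ∈ D₂, g₁ X ∈ classA m k₁)
    (hg₀ : ∀ X ∈ D₂, g₀ X ∈ classA m k₀)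
    (hI₁ : ∀ X ∈ D₂, ∀ Y ∈ D₂, X ≠ Y → Incomp (g₁ X) (g₁ Y))
    (hI₀ : ∀ X ∈ D₂, ∀ Y ∈ D₂, X ≠ Y → Incomp (g₀ X) (g₀ Y))
    (A : Matrix (Fin a) (Fin a) ℕ) (hB : ∀ x, B x ∈ D₂) (hB' : ∀ x, B' x ∈ D₂) (hne : B ≠ B') :
    Incomp (productMatrix g₁ g₀ A B) (productMatrix g₁ g₀ A B') := by
  obtain ⟨⟨p, q⟩, hpq⟩ := Function.ne_iff.mp hne
  have hG := productMatrix_block_mem_classA hg₁ hg₀ A hB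
  have hG' := productMatrix_block_mem_classA hg₁ hg₀ A hB'
  have hblock : Incomp (if A p q = 1 then g₁ (B (p, q)) else g₀ (B (p, q)))
      (if A p q = 1 then g₁ (B' (p, q)) else g₀ (B' (p, q))) := by
    split_ifs
    exacts [hI₁ _ (hB _) _ (hB' _) hpq, hI₀ _ (hB _) _ (hB' _) hpq]
  exact ⟨not_brle_blockMatrix hG hG' hblock.1, not_brle_blockMatrix hG' hG hblock.2⟩

lemma incomp_productMatrix_of_weight_ne (hm : 0 < m) (hk : k₁ ≠ k₀)
    (hg₁ : ∀ X ∈ D₂, g₁ X ∈ classA m k₁) (hg₀ : ∀ X ∈ D₂, g₀ X ∈ classA m k₀)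
    {A A' : Matrix (Fin a) (Fin a) ℕ} (hA : ZeroOne A) (hA' : ZeroOne A') (hAA' : Incomp A A')
    (hB : ∀ x, B x ∈ D₂) (hB' : ∀ x, B' x ∈ D₂) :
    Incomp (productMatrix g₁ g₀ A B) (productMatrix g₁ g₀ A' B') := by
  let last : Fin m := ⟨m - 1, by omega⟩
  have hlast : ∀ r, r ≤ last := fun r => Fin.le_def.mpr (by simp only [last]; omega)
  have hweight : ∀ {A : Matrix (Fin a) (Fin a) ℕ}, ZeroOne A → ∀ p q,
      (if A p q = 1 then (k₁ : ℤ) else k₀) = k₀ + (k₁ - k₀) * A p q := by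
    intro A hA p q
    rcases hA p q with h | h <;> simp [h]
  refine Incomp.of_sigmaM_sub_eq_mul (fun p => finProdFinEquiv (p, last))
    (fun q => finProdFinEquiv (q, last)) (c := m * (k₁ - k₀ : ℤ))
    (mul_ne_zero (by exact_mod_cast hm.ne') (sub_ne_zero.mpr (by exact_mod_cast hk)))
    (fun i j => ?_) hAA'
  rw [productMatrix, productMatrix,
    sigmaM_blockMatrix_corner (productMatrix_block_mem_classA hg₁ hg₀ A hB) i j hlast hlast,
    sigmaM_blockMatrix_corner (productMatrix_block_mem_classA hg₁ hg₀ A' hB') i j hlast hlast,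
    sigmaM_eq_sum_Iic, sigmaM_eq_sum_Iic]
  push_cast
  simp only [hweight hA, hweight hA', sum_add_distrib, ← mul_sum]
  ring

lemma incomp_productMatrix_of_forall_not_brle {k : ℕ} (hg₁ : ∀ X ∈ D₂, g₁ X ∈ classA m k)
    (hg₀ : ∀ X ∈ D₂, g₀ X ∈ classA m k) (hcross : ∀ X ∈ D₂, ∀ Y ∈ D₂, ¬ brle (g₁ X) (g₀ Y))
    {A A' : Matrix (Fin a) (Fin a) ℕ} (hA : A ∈ classA a (a / 2)) (hA' : A' ∈ classA a (a / 2))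
    (hAA' : A ≠ A') (hB : ∀ x, B x ∈ D₂) (hB' : ∀ x, B' x ∈ D₂) :
    Incomp (productMatrix g₁ g₀ A B) (productMatrix g₁ g₀ A' B') := by
  obtain ⟨p, hp⟩ := Function.ne_iff.mp hAA'
  have hrow : ∑ q, A p q = ∑ q, A' p q := (hA.2.1 p).trans (hA'.2.1 p).symm
  obtain ⟨q₁, hq₁, hq₁'⟩ := exists_eq_one_and_eq_zero (hA.1 p) hrow hp
  obtain ⟨q₂, hq₂', hq₂⟩ := exists_eq_one_and_eq_zero (hA'.1 p) hrow.symm hp.symm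
  have hG := productMatrix_block_mem_classA hg₁ hg₀ A hB
  have hG' := productMatrix_block_mem_classA hg₁ hg₀ A' hB'
  simp only [ite_self] at hG hG'
  refine ⟨not_brle_blockMatrix (p := p) (q := q₁) hG hG' ?_,
    not_brle_blockMatrix (p := p) (q := q₂) hG' hG ?_⟩
  · simpa [hq₁, hq₁'] using hcross _ (hB _) _ (hB' _)
  · simpa [hq₂, hq₂'] using hcross _ (hB' _) _ (hB _)

lemma exists_antichain_productMatrix (ha : Even a) {D₁ : Set (Matrix (Fin a) (Fin a) ℕ)}
    (hD₁ : D₁ ⊆ classA a (a / 2)) (hk : k₁ + k₀ = m)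
    (hg₁ : ∀ X ∈ D₂, g₁ X ∈ classA m k₁) (hg₀ : ∀ X ∈ D₂, g₀ X ∈ classA m k₀)
    (hI₁ : ∀ X ∈ D₂, ∀ Y ∈ D₂, X ≠ Y → Incomp (g₁ X) (g₁ Y))
    (hI₀ : ∀ X ∈ D₂, ∀ Y ∈ D₂, X ≠ Y → Incomp (g₀ X) (g₀ Y))
    (hdiff : ∀ A ∈ D₁, ∀ A' ∈ D₁, A ≠ A' → ∀ B B' : Fin a × Fin a → Matrix (Fin m) (Fin m) ℕ,
      (∀ x, B x ∈ D₂) → (∀ x, B' x ∈ D₂) →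
        Incomp (productMatrix g₁ g₀ A B) (productMatrix g₁ g₀ A' B')) :
    ∃ D : Set (Matrix (Fin (a * m)) (Fin (a * m)) ℕ),
      D ⊆ classA (a * m) (a * m / 2) ∧ IsAntichainB D ∧
      D.ncard = D₁.ncard * D₂.ncard ^ (a ^ 2) := by
  set S := D₁ ×ˢ Set.pi Set.univ fun _ : Fin a × Fin a => D₂
  set f := fun P : Matrix (Fin a) (Fin a) ℕ × (Fin a × Fin a → Matrix (Fin m) (Fin m) ℕ) =>
    productMatrix g₁ g₀ P.1 P.2
  have hS : ∀ {P}, P ∈ S ↔ P.1 ∈ D₁ ∧ ∀ x, P.2 x ∈ D₂ := by simp [S]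
  have hf : ∀ P ∈ S, ∀ P' ∈ S, P ≠ P' → Incomp (f P) (f P') := by
    rintro ⟨A, B⟩ hP ⟨A', B'⟩ hP' hne
    obtain ⟨hA, hB⟩ := hS.mp hP
    obtain ⟨hA', hB'⟩ := hS.mp hP'
    by_cases hAA' : A = A'
    · subst hAA'
      exact incomp_productMatrix_of_ne hg₁ hg₀ hI₁ hI₀ A hB hB' fun h => hne (Prod.ext rfl h)
    · exact hdiff A hA A' hA' hAA' B B' hB hB'
  refine ⟨f '' S, ?_, ?_, ?_⟩
  · rintro _ ⟨P, hP, rfl⟩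
    exact productMatrix_mem_classA ha hk hg₁ hg₀ (hD₁ (hS.mp hP).1) (hS.mp hP).2
  · rintro _ ⟨P, hP, rfl⟩ _ ⟨P', hP', rfl⟩ hne
    exact hf P hP P' hP' fun h => hne (h ▸ rfl)
  · have hinj : Set.InjOn f S := fun P hP P' hP' h =>
      by_contra fun hne => (hf P hP P' hP' hne).ne h
    have hpi : (Set.pi Set.univ fun _ : Fin a × Fin a => D₂).ncard = D₂.ncard ^ (a ^ 2) := by
      rw [← Nat.card_coe_set_eq, Nat.card_congr (Equiv.Set.univPi _), Nat.card_pi, prod_const,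
        card_univ, Fintype.card_prod, Fintype.card_fin, Nat.card_coe_set_eq, sq]
    rw [hinj.ncard_image, Set.ncard_prod, hpi]

end Product

/-- A partition of `A(4,2)` into 13 chains. The levels `48` and `52` of `sigmaTotal` are
antichains of 13 elements, so every chain meets each of them exactly once. -/
def bruhatChains42 : List (List (Matrix (Fin 4) (Fin 4) ℕ)) :=
  [[!![1, 0, 1, 0; 1, 0, 0, 1; 0, 1, 1, 0; 0, 1, 0, 1],
    !![1, 0, 1, 0; 0, 1, 0, 1; 1, 0, 1, 0; 0, 1, 0, 1],
    !![1, 0, 1, 0; 0, 0, 1, 1; 1, 1, 0, 0; 0, 1, 0, 1],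
    !![1, 0, 1, 0; 0, 0, 1, 1; 0, 1, 0, 1; 1, 1, 0, 0]],
   [!![1, 0, 1, 0; 1, 0, 1, 0; 0, 1, 0, 1; 0, 1, 0, 1],
    !![1, 0, 1, 0; 1, 0, 0, 1; 0, 1, 0, 1; 0, 1, 1, 0],
    !![1, 0, 1, 0; 0, 1, 0, 1; 1, 0, 0, 1; 0, 1, 1, 0],
    !![1, 0, 1, 0; 0, 1, 0, 1; 0, 1, 0, 1; 1, 0, 1, 0],
    !![1, 0, 1, 0; 0, 1, 0, 1; 0, 0, 1, 1; 1, 1, 0, 0],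
    !![0, 1, 1, 0; 1, 0, 0, 1; 0, 0, 1, 1; 1, 1, 0, 0]],
   [!![1, 0, 1, 0; 1, 1, 0, 0; 0, 0, 1, 1; 0, 1, 0, 1],
    !![1, 0, 0, 1; 1, 0, 1, 0; 0, 1, 1, 0; 0, 1, 0, 1],
    !![1, 0, 0, 1; 1, 0, 1, 0; 0, 1, 0, 1; 0, 1, 1, 0],
    !![1, 0, 0, 1; 1, 0, 0, 1; 0, 1, 1, 0; 0, 1, 1, 0],
    !![1, 0, 0, 1; 0, 1, 0, 1; 1, 0, 1, 0; 0, 1, 1, 0],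
    !![1, 0, 0, 1; 0, 0, 1, 1; 1, 1, 0, 0; 0, 1, 1, 0],
    !![1, 0, 0, 1; 0, 0, 1, 1; 0, 1, 1, 0; 1, 1, 0, 0]],
   [!![1, 0, 1, 0; 1, 1, 0, 0; 0, 1, 0, 1; 0, 0, 1, 1],
    !![0, 1, 1, 0; 1, 1, 0, 0; 1, 0, 0, 1; 0, 0, 1, 1],
    !![0, 1, 1, 0; 1, 1, 0, 0; 0, 0, 1, 1; 1, 0, 0, 1],
    !![0, 1, 1, 0; 1, 0, 1, 0; 0, 1, 0, 1; 1, 0, 0, 1],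
    !![0, 1, 1, 0; 0, 1, 1, 0; 1, 0, 0, 1; 1, 0, 0, 1],
    !![0, 1, 1, 0; 0, 1, 0, 1; 1, 0, 1, 0; 1, 0, 0, 1],
    !![0, 1, 1, 0; 0, 0, 1, 1; 1, 1, 0, 0; 1, 0, 0, 1],
    !![0, 1, 1, 0; 0, 0, 1, 1; 1, 0, 0, 1; 1, 1, 0, 0]],
   [!![1, 1, 0, 0; 0, 0, 1, 1; 1, 1, 0, 0; 0, 0, 1, 1],
    !![1, 0, 1, 0; 0, 1, 0, 1; 1, 1, 0, 0; 0, 0, 1, 1],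
    !![1, 0, 0, 1; 0, 1, 1, 0; 1, 1, 0, 0; 0, 0, 1, 1],
    !![1, 0, 0, 1; 0, 1, 1, 0; 1, 0, 1, 0; 0, 1, 0, 1],
    !![1, 0, 0, 1; 0, 1, 1, 0; 0, 1, 1, 0; 1, 0, 0, 1],
    !![1, 0, 0, 1; 0, 1, 1, 0; 0, 1, 0, 1; 1, 0, 1, 0],
    !![1, 0, 0, 1; 0, 1, 0, 1; 0, 1, 1, 0; 1, 0, 1, 0]],
   [!![1, 1, 0, 0; 0, 1, 0, 1; 1, 0, 1, 0; 0, 0, 1, 1],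
    !![1, 1, 0, 0; 0, 0, 1, 1; 1, 0, 1, 0; 0, 1, 0, 1],
    !![1, 1, 0, 0; 0, 0, 1, 1; 0, 1, 1, 0; 1, 0, 0, 1],
    !![1, 1, 0, 0; 0, 0, 1, 1; 0, 1, 0, 1; 1, 0, 1, 0],
    !![1, 1, 0, 0; 0, 0, 1, 1; 0, 0, 1, 1; 1, 1, 0, 0],
    !![1, 0, 0, 1; 0, 1, 1, 0; 0, 0, 1, 1; 1, 1, 0, 0]],
   [!![1, 1, 0, 0; 0, 1, 1, 0; 0, 0, 1, 1; 1, 0, 0, 1],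
    !![1, 1, 0, 0; 0, 1, 0, 1; 0, 0, 1, 1; 1, 0, 1, 0],
    !![0, 1, 0, 1; 1, 1, 0, 0; 0, 0, 1, 1; 1, 0, 1, 0],
    !![0, 1, 0, 1; 1, 0, 1, 0; 0, 1, 0, 1; 1, 0, 1, 0],
    !![0, 1, 0, 1; 1, 0, 1, 0; 0, 0, 1, 1; 1, 1, 0, 0]],
   [!![1, 1, 0, 0; 0, 1, 1, 0; 1, 0, 0, 1; 0, 0, 1, 1],
    !![0, 1, 1, 0; 1, 0, 1, 0; 1, 0, 0, 1; 0, 1, 0, 1],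
    !![0, 1, 1, 0; 1, 0, 0, 1; 1, 0, 1, 0; 0, 1, 0, 1],
    !![0, 1, 0, 1; 1, 0, 1, 0; 1, 0, 1, 0; 0, 1, 0, 1],
    !![0, 0, 1, 1; 1, 1, 0, 0; 1, 0, 0, 1; 0, 1, 1, 0],
    !![0, 0, 1, 1; 1, 0, 0, 1; 1, 1, 0, 0; 0, 1, 1, 0],
    !![0, 0, 1, 1; 1, 0, 0, 1; 0, 1, 1, 0; 1, 1, 0, 0]],
   [!![1, 1, 0, 0; 1, 0, 0, 1; 0, 0, 1, 1; 0, 1, 1, 0],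
    !![1, 1, 0, 0; 0, 0, 1, 1; 1, 0, 0, 1; 0, 1, 1, 0],
    !![0, 1, 1, 0; 1, 0, 0, 1; 1, 0, 0, 1; 0, 1, 1, 0],
    !![0, 1, 1, 0; 1, 0, 0, 1; 0, 1, 0, 1; 1, 0, 1, 0],
    !![0, 1, 1, 0; 0, 1, 0, 1; 1, 0, 0, 1; 1, 0, 1, 0]],
   [!![1, 1, 0, 0; 1, 0, 0, 1; 0, 1, 1, 0; 0, 0, 1, 1],
    !![1, 0, 0, 1; 1, 1, 0, 0; 0, 1, 1, 0; 0, 0, 1, 1],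
    !![1, 0, 0, 1; 1, 1, 0, 0; 0, 0, 1, 1; 0, 1, 1, 0],
    !![1, 0, 0, 1; 0, 1, 1, 0; 1, 0, 0, 1; 0, 1, 1, 0],
    !![0, 1, 0, 1; 1, 0, 1, 0; 1, 0, 0, 1; 0, 1, 1, 0],
    !![0, 1, 0, 1; 1, 0, 0, 1; 1, 0, 1, 0; 0, 1, 1, 0],
    !![0, 1, 0, 1; 1, 0, 0, 1; 0, 1, 1, 0; 1, 0, 1, 0]],
   [!![1, 1, 0, 0; 1, 0, 1, 0; 0, 0, 1, 1; 0, 1, 0, 1],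
    !![1, 0, 1, 0; 0, 1, 1, 0; 1, 0, 0, 1; 0, 1, 0, 1],
    !![1, 0, 1, 0; 0, 1, 1, 0; 0, 1, 0, 1; 1, 0, 0, 1],
    !![1, 0, 1, 0; 0, 1, 0, 1; 0, 1, 1, 0; 1, 0, 0, 1],
    !![0, 1, 1, 0; 1, 0, 0, 1; 0, 1, 1, 0; 1, 0, 0, 1],
    !![0, 1, 0, 1; 1, 0, 1, 0; 0, 1, 1, 0; 1, 0, 0, 1],
    !![0, 1, 0, 1; 0, 1, 1, 0; 1, 0, 1, 0; 1, 0, 0, 1],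
    !![0, 1, 0, 1; 0, 1, 1, 0; 1, 0, 0, 1; 1, 0, 1, 0],
    !![0, 1, 0, 1; 0, 1, 0, 1; 1, 0, 1, 0; 1, 0, 1, 0],
    !![0, 1, 0, 1; 0, 0, 1, 1; 1, 1, 0, 0; 1, 0, 1, 0],
    !![0, 1, 0, 1; 0, 0, 1, 1; 1, 0, 1, 0; 1, 1, 0, 0]],
   [!![1, 1, 0, 0; 1, 0, 1, 0; 0, 1, 0, 1; 0, 0, 1, 1],
    !![0, 1, 1, 0; 1, 0, 0, 1; 1, 1, 0, 0; 0, 0, 1, 1],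
    !![0, 1, 0, 1; 1, 0, 1, 0; 1, 1, 0, 0; 0, 0, 1, 1],
    !![0, 0, 1, 1; 1, 1, 0, 0; 1, 1, 0, 0; 0, 0, 1, 1],
    !![0, 0, 1, 1; 1, 1, 0, 0; 1, 0, 1, 0; 0, 1, 0, 1],
    !![0, 0, 1, 1; 1, 1, 0, 0; 0, 1, 1, 0; 1, 0, 0, 1],
    !![0, 0, 1, 1; 1, 1, 0, 0; 0, 1, 0, 1; 1, 0, 1, 0],
    !![0, 0, 1, 1; 1, 1, 0, 0; 0, 0, 1, 1; 1, 1, 0, 0],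
    !![0, 0, 1, 1; 1, 0, 1, 0; 0, 1, 0, 1; 1, 1, 0, 0],
    !![0, 0, 1, 1; 0, 1, 1, 0; 1, 0, 0, 1; 1, 1, 0, 0]],
   [!![1, 1, 0, 0; 1, 1, 0, 0; 0, 0, 1, 1; 0, 0, 1, 1],
    !![0, 1, 0, 1; 1, 1, 0, 0; 1, 0, 1, 0; 0, 0, 1, 1],
    !![0, 0, 1, 1; 1, 0, 1, 0; 1, 1, 0, 0; 0, 1, 0, 1],
    !![0, 0, 1, 1; 0, 1, 1, 0; 1, 1, 0, 0; 1, 0, 0, 1],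
    !![0, 0, 1, 1; 0, 1, 0, 1; 1, 1, 0, 0; 1, 0, 1, 0],
    !![0, 0, 1, 1; 0, 1, 0, 1; 1, 0, 1, 0; 1, 1, 0, 0],
    !![0, 0, 1, 1; 0, 0, 1, 1; 1, 1, 0, 0; 1, 1, 0, 0]]]

def rows42 : List (Fin 4 → ℕ) :=
  [![0, 0, 1, 1], ![0, 1, 0, 1], ![0, 1, 1, 0], ![1, 0, 0, 1], ![1, 0, 1, 0], ![1, 1, 0, 0]]

lemma mem_rows42 {r : Fin 4 → ℕ} (hr : ∀ j, r j = 0 ∨ r j = 1) (hs : ∑ j, r j = 2) :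
    r ∈ rows42 := by
  have hall : ∀ v : Fin 4 → Fin 2, ∑ j, (v j : ℕ) = 2 → (fun j => (v j : ℕ)) ∈ rows42 := by
    decide
  have hv : r = fun j => ((⟨r j, by rcases hr j with h | h <;> omega⟩ : Fin 2) : ℕ) := rfl
  rw [hv] at hs ⊢
  exact hall _ hs

lemma exists_bruhatChains42_mem {X : Matrix (Fin 4) (Fin 4) ℕ} (hX : X ∈ classA 4 2) :
    ∃ c ∈ bruhatChains42, X ∈ c := by
  have hall : ∀ v₀ ∈ rows42, ∀ v₁ ∈ rows42, ∀ v₂ ∈ rows42, ∀ v₃ ∈ rows42,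
      (∀ j, v₀ j + v₁ j + v₂ j + v₃ j = 2) →
        ∃ c ∈ bruhatChains42, Matrix.of ![v₀, v₁, v₂, v₃] ∈ c := by
    decide
  obtain ⟨hz, hr, hc⟩ := hX
  have hrow : ∀ i, X i ∈ rows42 := fun i => mem_rows42 (hz i) (hr i)
  have hX : X = Matrix.of ![X 0, X 1, X 2, X 3] := by
    ext i j
    fin_cases i <;> rfl
  rw [hX]
  refine hall _ (hrow 0) _ (hrow 1) _ (hrow 2) _ (hrow 3) fun j => ?_
  simpa [colSum, Fin.sum_univ_four] using hc j

lemma bruhatChains42_isChain : ∀ c ∈ bruhatChains42, ∀ X ∈ c, ∀ Y ∈ c, brle X Y ∨ brle Y X := by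
  decide

def levelElem (t : ℕ) (c : List (Matrix (Fin 4) (Fin 4) ℕ)) : Matrix (Fin 4) (Fin 4) ℕ :=
  (c.find? fun X => sigmaTotal X = t).getD 0

lemma levelElem_bruhatChains42 : ∀ t ∈ [48, 52], ∀ c ∈ bruhatChains42,
    levelElem t c ∈ classA 4 2 ∧ sigmaTotal (levelElem t c) = t := by
  decide

lemma levelElem_injOn_bruhatChains42 : ∀ t ∈ [48, 52], ∀ c ∈ bruhatChains42,
    ∀ c' ∈ bruhatChains42, levelElem t c = levelElem t c' → c = c' := by
  decide

def chainOf (X : Matrix (Fin 4) (Fin 4) ℕ) : List (Matrix (Fin 4) (Fin 4) ℕ) :=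
  (bruhatChains42.find? fun c => X ∈ c).getD []

lemma chainOf_spec {X : Matrix (Fin 4) (Fin 4) ℕ} (hX : X ∈ classA 4 2) :
    chainOf X ∈ bruhatChains42 ∧ X ∈ chainOf X := by
  obtain ⟨c, hc, hXc⟩ := exists_bruhatChains42_mem hX
  cases h : bruhatChains42.find? fun c => X ∈ c with
  | none => exact absurd (by simpa using hXc) (List.find?_eq_none.mp h c hc)
  | some c' =>
    simp only [chainOf, h, Option.getD_some]
    exact ⟨List.mem_of_find?_eq_some h, by simpa using List.find?_some h⟩

def encode42 (t : ℕ) (X : Matrix (Fin 4) (Fin 4) ℕ) : Matrix (Fin 4) (Fin 4) ℕ :=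
  levelElem t (chainOf X)

section Encode

variable {t : ℕ} {X Y : Matrix (Fin 4) (Fin 4) ℕ}

lemma encode42_mem_classA (ht : t ∈ [48, 52]) (hX : X ∈ classA 4 2) :
    encode42 t X ∈ classA 4 2 :=
  (levelElem_bruhatChains42 t ht _ (chainOf_spec hX).1).1

lemma sigmaTotal_encode42 (ht : t ∈ [48, 52]) (hX : X ∈ classA 4 2) :
    sigmaTotal (encode42 t X) = t :=
  (levelElem_bruhatChains42 t ht _ (chainOf_spec hX).1).2

lemma incomp_encode42 (ht : t ∈ [48, 52]) (hX : X ∈ classA 4 2) (hY : Y ∈ classA 4 2)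
    (hXY : Incomp X Y) : Incomp (encode42 t X) (encode42 t Y) := by
  obtain ⟨hcX, hXc⟩ := chainOf_spec hX
  obtain ⟨hcY, hYc⟩ := chainOf_spec hY
  refine incomp_of_sigmaTotal_eq
    (by rw [sigmaTotal_encode42 ht hX, sigmaTotal_encode42 ht hY]) fun heq => ?_
  rw [← levelElem_injOn_bruhatChains42 t ht _ hcX _ hcY heq] at hYc
  rcases bruhatChains42_isChain _ hcX X hXc Y hYc with h | h
  exacts [hXY.1 h, hXY.2 h]

lemma not_brle_encode42 (hX : X ∈ classA 4 2) (hY : Y ∈ classA 4 2) :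
    ¬ brle (encode42 48 X) (encode42 52 Y) :=
  not_brle_of_sigmaTotal_lt <| by
    rw [sigmaTotal_encode42 (by simp) hX, sigmaTotal_encode42 (by simp) hY]
    norm_num

end Encode

end Bruhat

open Bruhat

/-- For `a` even and `n = am`, antichains `D₁` of `A(a, a/2)`
and `D₂` of `A(m,2)` in the Bruhat order yield an antichain of size
`|D₁|·|D₂|^{a²}` in the Bruhat order of `A(n, n/2)`. -/
theorem product_construction_halfreg (a m : ℕ) (ha : 0 < a) (hm : 0 < m)
    (hae : Even a)
    (D₁ : Set (Matrix (Fin a) (Fin a) ℕ)) (D₂ : Set (Matrix (Fin m) (Fin m) ℕ))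
    (hD₁ : D₁ ⊆ classA a (a/2)) (hD₂ : D₂ ⊆ classA m 2)
    (hA₁ : IsAntichainB D₁) (hA₂ : IsAntichainB D₂) :
    ∃ D : Set (Matrix (Fin (a*m)) (Fin (a*m)) ℕ),
      D ⊆ classA (a*m) ((a*m)/2) ∧ IsAntichainB D ∧
      D.ncard = D₁.ncard * D₂.ncard ^ (a^2) := by
  rcases D₂.eq_empty_or_nonempty with rfl | ⟨X, hX⟩
  · exact ⟨∅, Set.empty_subset _, fun _ h => h.elim, by simp [ha.ne']⟩
  have hm₂ : 2 ≤ m := le_of_mem_classA hm (hD₂ hX)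
  by_cases hm₄ : m = 4
  · subst hm₄
    have hg : ∀ t ∈ [48, 52], ∀ X ∈ D₂, encode42 t X ∈ classA 4 2 :=
      fun t ht X hX => encode42_mem_classA ht (hD₂ hX)
    have hI : ∀ t ∈ [48, 52], ∀ X ∈ D₂, ∀ Y ∈ D₂, X ≠ Y → Incomp (encode42 t X) (encode42 t Y) :=
      fun t ht X hX Y hY hne => incomp_encode42 ht (hD₂ hX) (hD₂ hY) (hA₂ X hX Y hY hne)
    exact exists_antichain_productMatrix hae hD₁ rfl (hg 48 (by simp)) (hg 52 (by simp))
      (hI 48 (by simp)) (hI 52 (by simp)) fun A hA A' hA' hne B B' hB hB' =>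
        incomp_productMatrix_of_forall_not_brle (hg 48 (by simp)) (hg 52 (by simp))
          (fun X hX Y hY => not_brle_encode42 (hD₂ hX) (hD₂ hY)) (hD₁ hA) (hD₁ hA') hne hB hB'
  · have hg₀ : ∀ X ∈ D₂, compl X ∈ classA m (m - 2) := fun X hX => compl_mem_classA (hD₂ hX)
    exact exists_antichain_productMatrix (g₁ := id) hae hD₁ (by omega) hD₂ hg₀ hA₂
      (fun X hX Y hY hne => incomp_compl (hD₂ hX).1 (hD₂ hY).1 (hA₂ X hX Y hY hne))
      fun A hA A' hA' hne B B' hB hB' =>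
        incomp_productMatrix_of_weight_ne hm (by omega) hD₂ hg₀ (hD₁ hA).1 (hD₁ hA').1
          (hA₁ A hA A' hA' hne) hB hB'
end

section
/- Let k be a positive integer divisible by 4. Then there is an antichain of size 13·((k/2)!)^{16} / 16^{k} in the Bruhat order of A(2k,k); consequently w(2k,k) ≥ 13·((k/2)!)^{16} / 16^{k}. -/
open Finset

/-! For a `k × k` (0,1)-matrix `B`, the matrix `[[B, J - B], [J - B, B]]` lies in `A(2k,k)`,
which gives `2^(k²)` distinct matrices of `A(2k,k)`. The numbers `σ_{ij}` determine a matrix,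
so two Bruhat-comparable matrices with the same total `∑ σ_{ij}` are equal. This total is at
most `8k⁴` on `A(2k,k)`, so by pigeonhole at least `2^(k²)/(8k⁴+1)` of the matrices above share
it and form an antichain; for `4 ∣ k` that is at least `13·((k/2)!)^16/16^k`. -/

open Matrix Nat

theorem eq_of_forall_sum_filter_le_eq {ι M : Type*} [Fintype ι] [LinearOrder ι]
    [AddCancelCommMonoid M] {f g : ι → M}
    (h : ∀ j, ∑ l ∈ univ.filter (· ≤ j), f l = ∑ l ∈ univ.filter (· ≤ j), g l) :
    f = g := by
  funext j
  induction j using WellFoundedLT.induction with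
  | _ j ih =>
    have hsplit : ∀ u : ι → M, ∑ l ∈ univ.filter (· ≤ j), u l =
        u j + ∑ l ∈ univ.filter (· < j), u l := by
      intro u
      have hins : univ.filter (· ≤ j) = insert j (univ.filter (· < j)) := by
        ext l
        simp [le_iff_lt_or_eq, or_comm]
      rw [hins, sum_insert (by simp)]
    have hlt : ∑ l ∈ univ.filter (· < j), f l = ∑ l ∈ univ.filter (· < j), g l :=
      sum_congr rfl fun l hl => ih l (mem_filter.1 hl).2
    have := h j
    rwa [hsplit, hsplit, hlt, add_left_inj] at this

theorem sigmaM_injective {m n : ℕ} : Function.Injective (sigmaM (m := m) (n := n)) := by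
  intro A C h
  have hrow : ∀ j, (fun i => ∑ l ∈ univ.filter (· ≤ j), A i l) =
      fun i => ∑ l ∈ univ.filter (· ≤ j), C i l :=
    fun j => eq_of_forall_sum_filter_le_eq fun i => congrFun (congrFun h i) j
  funext i
  exact eq_of_forall_sum_filter_le_eq fun j => congrFun (hrow j) i

theorem sigmaM_le_sum {m n : ℕ} (A : Matrix (Fin m) (Fin n) ℕ) (i : Fin m) (j : Fin n) :
    sigmaM A i j ≤ ∑ i, ∑ j, A i j :=
  (sum_le_sum fun _ _ => sum_le_sum_of_subset (filter_subset _ _)).trans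
    (sum_le_sum_of_subset (filter_subset _ _))

def sigmaSum {m n : ℕ} (A : Matrix (Fin m) (Fin n) ℕ) : ℕ :=
  ∑ i, ∑ j, sigmaM A i j

theorem eq_of_brle_of_sigmaSum_eq {m n : ℕ} {A C : Matrix (Fin m) (Fin n) ℕ}
    (hle : brle A C) (hsum : sigmaSum A = sigmaSum C) : A = C := by
  have hle' : ∀ p : Fin m × Fin n, sigmaM C p.1 p.2 ≤ sigmaM A p.1 p.2 := fun p => hle p.1 p.2
  have heq := (sum_eq_sum_iff_of_le fun p _ => hle' p).1 <| by
    simpa only [sigmaSum, ← Fintype.sum_prod_type'] using hsum.symm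
  exact sigmaM_injective (funext₂ fun i j => (heq (i, j) (mem_univ _)).symm)

theorem incomp_of_sigmaSum_eq {m n : ℕ} {A C : Matrix (Fin m) (Fin n) ℕ}
    (hne : A ≠ C) (hsum : sigmaSum A = sigmaSum C) : Incomp A C :=
  ⟨fun h => hne (eq_of_brle_of_sigmaSum_eq h hsum),
    fun h => hne (eq_of_brle_of_sigmaSum_eq h hsum.symm).symm⟩

theorem sigmaSum_le {m n : ℕ} (A : Matrix (Fin m) (Fin n) ℕ) :
    sigmaSum A ≤ m * n * ∑ i, ∑ j, A i j := by
  calc sigmaSum A ≤ ∑ _i : Fin m, ∑ _j : Fin n, ∑ i, ∑ j, A i j :=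
        sum_le_sum fun i _ => sum_le_sum fun j _ => sigmaM_le_sum A i j
    _ = m * n * ∑ i, ∑ j, A i j := by simp [mul_assoc]

theorem exists_antichainB_card_eq {m n : ℕ} (S : Finset (Matrix (Fin m) (Fin n) ℕ))
    {b N : ℕ} (hb : ∀ A ∈ S, sigmaSum A ≤ b) (hN : (b + 1) * N ≤ #S) :
    ∃ D ⊆ S, IsAntichainB (D : Set (Matrix (Fin m) (Fin n) ℕ)) ∧ #D = N := by
  have hmaps : ∀ A ∈ S, sigmaSum A ∈ range (b + 1) :=
    fun A hA => mem_range.2 (Nat.lt_succ_of_le (hb A hA))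
  obtain ⟨t, -, hfiber⟩ := exists_le_card_fiber_of_mul_le_card_of_maps_to hmaps
    nonempty_range_add_one (by rwa [card_range])
  obtain ⟨D, hDS, rfl⟩ := exists_subset_card_eq hfiber
  refine ⟨D, hDS.trans (filter_subset _ _), fun A hA C hC hne => ?_, rfl⟩
  exact incomp_of_sigmaSum_eq hne
    (((mem_filter.1 (hDS hA)).2).trans ((mem_filter.1 (hDS hC)).2).symm)

theorem sigmaSum_le_of_mem_classA {n k : ℕ} {A : Matrix (Fin n) (Fin n) ℕ}
    (hA : A ∈ classA n k) : sigmaSum A ≤ n * n * (n * k) := by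
  have htotal : ∑ i, ∑ j, A i j = n * k :=
    calc ∑ i, ∑ j, A i j = ∑ i, rowSum A i := rfl
      _ = n * k := by simp [hA.2.1]
  exact htotal ▸ sigmaSum_le A

/-- The matrix `[[B, J - B], [J - B, B]]` of order `2k`, for a `k × k` (0,1)-matrix `B`
given by its Boolean entries. -/
def doubledMatrix {k : ℕ} (B : Matrix (Fin k) (Fin k) Bool) :
    Matrix (Fin (2 * k)) (Fin (2 * k)) ℕ :=
  (fromBlocks (B.map Bool.toNat) (B.map fun b => (!b).toNat)
    (B.map fun b => (!b).toNat) (B.map Bool.toNat)).submatrix e e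
where
  e : Fin (2 * k) ≃ Fin k ⊕ Fin k := (finCongr (two_mul k)).trans finSumFinEquiv.symm

theorem doubledMatrix_transpose {k : ℕ} (B : Matrix (Fin k) (Fin k) Bool) :
    (doubledMatrix B)ᵀ = doubledMatrix Bᵀ := by
  simp [doubledMatrix, transpose_submatrix, fromBlocks_transpose, transpose_map]

theorem rowSum_doubledMatrix {k : ℕ} (B : Matrix (Fin k) (Fin k) Bool) (i : Fin (2 * k)) :
    rowSum (doubledMatrix B) i = k := by
  have hrow : ∀ a : Fin k, ∑ j, ((B a j).toNat + (!B a j).toNat) = k := fun a => by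
    simp [show ∀ b : Bool, b.toNat + (!b).toNat = 1 by decide]
  unfold rowSum doubledMatrix
  simp only [submatrix_apply]
  rw [Equiv.sum_comp doubledMatrix.e (fun x => fromBlocks _ _ _ _ (doubledMatrix.e i) x),
    Fintype.sum_sum_type]
  rcases doubledMatrix.e i with a | a
  · simpa [← sum_add_distrib] using hrow a
  · simpa [← sum_add_distrib, add_comm] using hrow a

theorem doubledMatrix_mem_classA {k : ℕ} (B : Matrix (Fin k) (Fin k) Bool) :
    doubledMatrix B ∈ classA (2 * k) k := by
  refine ⟨fun i j => ?_, rowSum_doubledMatrix B, fun j => ?_⟩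
  · simp only [doubledMatrix, submatrix_apply]
    rcases doubledMatrix.e i with a | a <;> rcases doubledMatrix.e j with c | c <;> simp
  · change rowSum (doubledMatrix B)ᵀ j = k
    rw [doubledMatrix_transpose]
    exact rowSum_doubledMatrix Bᵀ j

theorem doubledMatrix_injective {k : ℕ} : Function.Injective (doubledMatrix (k := k)) := by
  intro B C h
  ext a c
  have := congrFun (congrFun h (doubledMatrix.e.symm (.inl a))) (doubledMatrix.e.symm (.inl c))
  exact (show Function.Injective Bool.toNat by decide) (by simpa [doubledMatrix] using this)

theorem two_pow_dvd_factorial_two_mul (c : ℕ) : 2 ^ c ∣ (2 * c)! := by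
  rcases c with _ | c
  · simp
  · rw [show 2 * (c + 1) = (2 * c + 1) + 1 by ring, factorial_eq_mul_doubleFactorial,
      show 2 * c + 1 + 1 = 2 * (c + 1) by ring, doubleFactorial_two_mul, mul_assoc]
    exact dvd_mul_right _ _

theorem mul_succ_le_two_pow {c : ℕ} (hc : 2 ≤ c) :
    (2 * c + 2) * (2 * c + 1) ≤ 2 ^ (2 * c + 1) := by
  induction c, hc using Nat.le_induction with
  | base => norm_num
  | succ c hc ih =>
    rw [show 2 * (c + 1) + 1 = 2 * c + 1 + 2 by ring, pow_add]
    nlinarith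

theorem thirteen_mul_factorial_pow_sixteen_le {c : ℕ} (hc : 1 ≤ c) :
    13 * (8 * (4 * c) ^ 4 + 1) * (2 * c)! ^ 16 ≤ 2 ^ (4 * c * (4 * c)) * 16 ^ (4 * c) := by
  induction c, hc using Nat.le_induction with
  | base => norm_num [factorial]
  | succ c hc ih =>
    obtain rfl | hc := hc.eq_or_lt
    · norm_num [factorial]
    have hfact : (2 * (c + 1))! = (2 * c + 2) * (2 * c + 1) * (2 * c)! := by
      rw [show 2 * (c + 1) = 2 * c + 1 + 1 by ring, factorial_succ, factorial_succ]
      ring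
    have hpoly : 8 * (4 * (c + 1)) ^ 4 + 1 ≤ 2 ^ 4 * (8 * (4 * c) ^ 4 + 1) := by
      have : (4 * (c + 1)) ^ 4 ≤ 2 ^ 4 * (4 * c) ^ 4 := by
        rw [← mul_pow]
        exact Nat.pow_le_pow_left (by omega) 4
      omega
    have hpow : ((2 * c + 2) * (2 * c + 1)) ^ 16 ≤ 2 ^ (32 * c + 16) := by
      calc _ ≤ (2 ^ (2 * c + 1)) ^ 16 := Nat.pow_le_pow_left (mul_succ_le_two_pow hc) 16
        _ = 2 ^ (32 * c + 16) := by rw [← pow_mul]; ring_nf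
    have hrhs : 2 ^ (4 * (c + 1) * (4 * (c + 1))) * 16 ^ (4 * (c + 1)) =
        2 ^ (32 * c + 32) * (2 ^ (4 * c * (4 * c)) * 16 ^ (4 * c)) := by
      rw [show 4 * (c + 1) * (4 * (c + 1)) = 4 * c * (4 * c) + (32 * c + 16) by ring,
        show 4 * (c + 1) = 4 * c + 4 by ring, show 32 * c + 32 = (32 * c + 16) + 16 by ring,
        pow_add, pow_add, pow_add, show (16 : ℕ) ^ 4 = 2 ^ 16 by norm_num]
      ring
    calc 13 * (8 * (4 * (c + 1)) ^ 4 + 1) * (2 * (c + 1))! ^ 16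
        ≤ 13 * (2 ^ 4 * (8 * (4 * c) ^ 4 + 1)) * (2 ^ (32 * c + 16) * (2 * c)! ^ 16) := by
          rw [hfact, mul_pow ((2 * c + 2) * (2 * c + 1))]
          exact Nat.mul_le_mul (Nat.mul_le_mul_left 13 hpoly) (Nat.mul_le_mul_right _ hpow)
      _ = 2 ^ (32 * c + 20) * (13 * (8 * (4 * c) ^ 4 + 1) * (2 * c)! ^ 16) := by ring
      _ ≤ 2 ^ (32 * c + 32) * (2 ^ (4 * c * (4 * c)) * 16 ^ (4 * c)) :=
          Nat.mul_le_mul (Nat.pow_le_pow_right two_pos (by omega : 32 * c + 20 ≤ 32 * c + 32)) ih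
      _ = _ := hrhs.symm

/-- If `k` is a positive multiple of `4`, then there is an
antichain of size `13·((k/2)!)^{16}/16^k` in the Bruhat order of `A(2k,k)`;
consequently `w(2k,k) ≥ 13·((k/2)!)^{16}/16^k`. -/
theorem width_A2kk_improved (k : ℕ) (hk : 0 < k) (h4 : 4 ∣ k) :
    ∃ D : Set (Matrix (Fin (2*k)) (Fin (2*k)) ℕ),
      D ⊆ classA (2*k) k ∧ IsAntichainB D ∧
      (D.ncard : ℚ) = 13 * (Nat.factorial (k/2) : ℚ)^16 / 16^k := by
  obtain ⟨c, rfl⟩ := h4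
  rw [show 4 * c / 2 = 2 * c by omega]
  have hdvd : 16 ^ (4 * c) ∣ 13 * (2 * c)! ^ 16 := by
    rw [show (16 : ℕ) ^ (4 * c) = (2 ^ c) ^ 16 by
      rw [← pow_mul, show (16 : ℕ) = 2 ^ 4 by norm_num, ← pow_mul]; ring_nf]
    exact dvd_mul_of_dvd_right (pow_dvd_pow_of_dvd (two_pow_dvd_factorial_two_mul c) 16) 13
  set S := univ.image (doubledMatrix (k := 4 * c))
  have hS : ∀ A ∈ S, A ∈ classA (2 * (4 * c)) (4 * c) := by
    simp only [S, mem_image]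
    rintro _ ⟨B, -, rfl⟩
    exact doubledMatrix_mem_classA B
  have hcard : #S = 2 ^ (4 * c * (4 * c)) := by
    rw [card_image_of_injective _ doubledMatrix_injective, Finset.card_univ,
      Fintype.card_eq_nat_card]
    simp [Matrix, ← pow_mul]
  have hN : (8 * (4 * c) ^ 4 + 1) * (13 * (2 * c)! ^ 16 / 16 ^ (4 * c)) ≤ #S := by
    rw [← Nat.mul_div_assoc _ hdvd, hcard]
    refine Nat.div_le_of_le_mul ?_
    linarith [thirteen_mul_factorial_pow_sixteen_le (show 1 ≤ c by omega)]
  obtain ⟨D, hDS, hD, hDcard⟩ := exists_antichainB_card_eq S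
    (fun A hA => (sigmaSum_le_of_mem_classA (hS A hA)).trans_eq (by ring)) hN
  refine ⟨D, fun A hA => hS A (hDS hA), hD, ?_⟩
  rw [Set.ncard_coe_finset, hDcard, Nat.cast_div hdvd (by positivity)]
  push_cast
  ring
end
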